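/- arXiv:2211.16184 — 9 statements merged into one kernel-verified Lean document; each statement's English description precedes it below -/
import Mathlib

section
/- Let G be a graph on n vertices containing no path of length k (a path with k edges) as a subgraph. Then G has at most (k-1)n/2 edges. Moreover, equality holds if and only if k divides n and G is the vertex-disjoint union of n/k complete graphs on k vertices. -/
/-- A path of length `k` (with `k` edges) in a graph: a sequence of `k+1` distinct
vertices whose consecutive members are adjacent. -/
def HasPathOfLength {V : Type*} (G : SimpleGraph V) (k : ℕ) : Prop :=
  ∃ p : Fin (k + 1) → V,
    Function.Injective p ∧ ∀ i : Fin k, G.Adj (p i.castSucc) (p i.succ)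

/-!
Induction on the number of vertices. Each step deletes either a nonempty union of components `S`
with `|S| ≤ k`, which spans at most `|S|(|S|-1)/2 ≤ (k-1)|S|/2` edges with equality only if `S`
is a `K_k`, or a vertex `v` with `2 deg v < k`. In the second case equality is impossible: a
neighbour of `v` lies in a `K_k` of `G - v`, and that clique together with `v` carries a path of
length `k`.

One of the two always exists. If all degrees are at least `k/2`, the ends of a longest path
`x₀ … xₘ` (`m < k`) have all their neighbours on it, and counting these neighbours yields chords
`x₀xᵢ₊₁` and `xᵢxₘ`, hence a cycle through the vertices of the path. Every rotation of that cycle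
is again a longest path, so no edge leaves its vertex set.
-/

open Finset

namespace List

theorem IsChain.exists_perm_head_eq {α : Type*} {R : α → α → Prop} {C : List α}
    (hC : C.IsChain R) (hclose : ∀ x ∈ C.getLast?, ∀ y ∈ C.head?, R x y) {a : α} (ha : a ∈ C) :
    ∃ C' : List α, C'.Perm C ∧ C'.IsChain R ∧ a ∈ C'.head? := by
  obtain ⟨s, t, rfl⟩ := append_of_mem ha
  obtain ⟨hs, ht, -⟩ := isChain_append.1 hC
  refine ⟨a :: t ++ s, perm_append_comm, ht.append hs fun x hx y hy => hclose x ?_ y ?_, by simp⟩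
  · simpa [getLast?_append] using hx
  · simp [head?_append, Option.mem_def.1 hy]

/-- The cycle is `x₀ … xᵢ xₘ xₘ₋₁ … xᵢ₊₁`, closed up by the chords `xᵢ xₘ` and `xᵢ₊₁ x₀`. -/
theorem IsChain.exists_perm_cyclic_of_rel {α : Type*} {R : α → α → Prop} [Std.Symm R]
    {l : List α} {m : ℕ} (hlen : l.length = m + 1) (hch : l.IsChain R) {i : ℕ} (hi : i < m)
    (hfirst : R l[0] l[i + 1]) (hlast : R l[i] l[m]) :
    ∃ C : List α, C.Perm l ∧ C.IsChain R ∧ ∀ x ∈ C.getLast?, ∀ y ∈ C.head?, R x y := by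
  have htake : (l.take (i + 1)).head? = some l[0] ∧ (l.take (i + 1)).getLast? = some l[i] := by
    simp [getLast?_take, head?_eq_getElem?]
  have hdrop : (l.drop (i + 1)).head? = some l[i + 1] ∧ (l.drop (i + 1)).getLast? = some l[m] := by
    rw [getLast?_drop, if_neg (by omega), getLast?_eq_getElem?]
    simp [hlen]
  refine ⟨l.take (i + 1) ++ (l.drop (i + 1)).reverse,
    ((reverse_perm _).append_left _).trans (by rw [take_append_drop]),
    (hch.take _).append (isChain_reverse.2 ((hch.drop _).imp fun _ _ => Std.Symm.symm _ _)) ?_, ?_⟩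
  · simp only [htake, hdrop, head?_reverse, Option.mem_def, Option.some.injEq]
    rintro _ rfl _ rfl
    exact hlast
  · simp only [htake, hdrop, head?_append, getLast?_append, getLast?_reverse, Option.some_or,
      Option.mem_def, Option.some.injEq]
    rintro _ rfl _ rfl
    exact Std.Symm.symm _ _ hfirst

end List

section

variable {V : Type*} {G : SimpleGraph V}

namespace SimpleGraph

variable (G) in
def IsAdjClosed (S : Finset V) : Prop :=
  ∀ ⦃a⦄, a ∈ S → ∀ ⦃b⦄, G.Adj a b → b ∈ S

end SimpleGraph

section Paths

theorem hasPathOfLength_iff_exists_list {k : ℕ} :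
    HasPathOfLength G k ↔ ∃ l : List V, l.length = k + 1 ∧ l.Nodup ∧ l.IsChain G.Adj := by
  constructor
  · rintro ⟨p, hp, hadj⟩
    exact ⟨List.ofFn p, List.length_ofFn, List.nodup_ofFn.2 hp,
      List.isChain_ofFn.2 fun i hi => hadj ⟨i, by omega⟩⟩
  · rintro ⟨l, hlen, hnd, hch⟩
    exact ⟨fun i => l[i.1], fun i j hij => Fin.ext (hnd.getElem_inj_iff.1 hij),
      fun i => List.isChain_iff_getElem.1 hch i (by omega)⟩

theorem hasPathOfLength_zero [Nonempty V] : HasPathOfLength G 0 :=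
  hasPathOfLength_iff_exists_list.2
    ⟨[Classical.arbitrary V], rfl, List.nodup_singleton _, List.isChain_singleton _⟩

theorem HasPathOfLength.map {W : Type*} {H : SimpleGraph W} (f : G ↪g H) {k : ℕ}
    (h : HasPathOfLength G k) : HasPathOfLength H k := by
  obtain ⟨p, hp, hadj⟩ := h
  exact ⟨f ∘ p, f.injective.comp hp, fun i => f.map_adj_iff.2 (hadj i)⟩

theorem exists_hasPathOfLength_and_not_succ [Nonempty V] {k : ℕ} (hk : ¬HasPathOfLength G k) :
    ∃ m < k, HasPathOfLength G m ∧ ¬HasPathOfLength G (m + 1) := by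
  classical
  have hex : ∃ m, ¬HasPathOfLength G m := ⟨k, hk⟩
  obtain ⟨m, hm⟩ : ∃ m, Nat.find hex = m + 1 := Nat.exists_eq_add_one_of_ne_zero
    fun h => Nat.find_spec hex (by rw [h]; exact hasPathOfLength_zero)
  exact ⟨m, by have := Nat.find_min' hex hk; omega,
    not_not.1 (Nat.find_min hex (by omega)), hm ▸ Nat.find_spec hex⟩

theorem mem_of_adj_head_of_not_hasPathOfLength {l : List V} (hnd : l.Nodup)
    (hch : l.IsChain G.Adj) (hmax : ¬HasPathOfLength G l.length) {a b : V} (ha : a ∈ l.head?)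
    (hab : G.Adj a b) : b ∈ l := by
  by_contra hb
  refine hmax (hasPathOfLength_iff_exists_list.2
    ⟨b :: l, rfl, List.nodup_cons.2 ⟨hb, hnd⟩, hch.cons fun y hy => ?_⟩)
  exact Option.mem_unique ha hy ▸ hab.symm

theorem hasPathOfLength_of_isNClique_of_adj [DecidableEq V] {k : ℕ} {T : Finset V}
    (hT : G.IsNClique k T) {u v : V} (hu : u ∈ T) (hv : v ∉ T) (hvu : G.Adj v u) :
    HasPathOfLength G k := by
  set l := u :: (T.erase u).toList
  have hnd : l.Nodup := List.nodup_cons.2 ⟨by simp, nodup_toList _⟩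
  have hmem : ∀ x ∈ l, x ∈ T := by simp +contextual [l, or_imp, hu]
  have hch : l.IsChain G.Adj :=
    (hnd.pairwise_of_forall_ne fun x hx y hy => hT.isClique (hmem x hx) (hmem y hy)).isChain
  have hk := hT.card_eq ▸ card_pos.2 ⟨u, hu⟩
  refine hasPathOfLength_iff_exists_list.2 ⟨v :: l, ?_, ?_, hch.cons (by simpa [l] using hvu)⟩
  · simp only [List.length_cons, length_toList, card_erase_of_mem hu, hT.card_eq, l]
    omega
  · exact List.nodup_cons.2 ⟨fun h => hv (hmem v h), hnd⟩

end Paths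

section LongestPath

variable [Fintype V] [DecidableRel G.Adj]

theorem card_filter_adj_eq_degree {ι : Type*} {s : Finset ι} {f : ι → V} {v : V}
    (hf : Set.InjOn f s) (hsurj : ∀ y, G.Adj v y → ∃ i ∈ s, f i = y) :
    #{i ∈ s | G.Adj v (f i)} = G.degree v := by
  rw [← G.card_neighborFinset_eq_degree]
  refine card_nbij f (fun i hi => ?_) (hf.mono (filter_subset _ _)) fun y hy => ?_
  · simpa using (mem_filter.1 hi).2
  · obtain ⟨i, hi, rfl⟩ := hsurj y (by simpa using hy)
    exact ⟨i, by simpa [hi] using hy, rfl⟩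

theorem exists_adj_getElem_of_not_hasPathOfLength {m : ℕ} {l : List V}
    (hlen : l.length = m + 1) (hnd : l.Nodup) (hch : l.IsChain G.Adj)
    (hmax : ¬HasPathOfLength G (m + 1)) (hdeg : m < G.degree l[0] + G.degree l[m]) :
    ∃ i : Fin m, G.Adj l[0] l[i.1 + 1] ∧ G.Adj l[i.1] l[m] := by
  have hrev : l.reverse.IsChain G.Adj := List.isChain_reverse.2 (hch.imp fun _ _ h => h.symm)
  have hfirst : ∀ y, G.Adj l[0] y → ∃ i ∈ (univ : Finset (Fin m)), l[i.1 + 1] = y := by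
    intro y hy
    obtain ⟨j, hj, rfl⟩ := List.mem_iff_getElem.1 <| mem_of_adj_head_of_not_hasPathOfLength hnd
      hch (hlen ▸ hmax) (by simp [List.head?_eq_getElem?]) hy
    obtain ⟨i, rfl⟩ : ∃ i, j = i + 1 :=
      Nat.exists_eq_add_one_of_ne_zero fun h => by subst h; exact hy.ne rfl
    exact ⟨⟨i, by omega⟩, mem_univ _, rfl⟩
  have hlast : ∀ y, G.Adj l[m] y → ∃ i ∈ (univ : Finset (Fin m)), l[i.1] = y := by
    intro y hy
    obtain ⟨j, hj, rfl⟩ := List.mem_iff_getElem.1 <| List.mem_reverse.1 <|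
      mem_of_adj_head_of_not_hasPathOfLength (List.nodup_reverse.2 hnd) hrev
        (by simpa [hlen] using hmax) (by simp [List.head?_reverse, List.getLast?_eq_getElem?, hlen])
        hy
    refine ⟨⟨j, lt_of_le_of_ne (by omega) fun h => ?_⟩, mem_univ _, rfl⟩
    subst h
    exact hy.ne rfl
  have hA : #{i : Fin m | G.Adj l[0] l[i.1 + 1]} = G.degree l[0] :=
    card_filter_adj_eq_degree (fun i _ j _ h => Fin.ext (by simpa using hnd.getElem_inj_iff.1 h))
      hfirst
  have hB : #{i : Fin m | G.Adj l[m] l[i.1]} = G.degree l[m] :=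
    card_filter_adj_eq_degree (fun i _ j _ h => Fin.ext (hnd.getElem_inj_iff.1 h)) hlast
  obtain ⟨i, hi⟩ := inter_nonempty_of_card_lt_card_add_card (filter_subset _ univ)
    (filter_subset (fun i : Fin m => G.Adj l[m] l[i.1]) univ)
    (by rw [hA, hB, card_univ, Fintype.card_fin]; exact hdeg)
  simp only [mem_inter, mem_filter, mem_univ, true_and] at hi
  exact ⟨i, hi.1, hi.2.symm⟩

theorem exists_isAdjClosed_of_not_hasPathOfLength [Nonempty V] {k : ℕ}
    (hforb : ¬HasPathOfLength G k) (hdeg : ∀ v, k ≤ 2 * G.degree v) :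
    ∃ S : Finset V, S.Nonempty ∧ #S ≤ k ∧ G.IsAdjClosed S := by
  classical
  obtain ⟨m, hmk, hm, hmax⟩ := exists_hasPathOfLength_and_not_succ hforb
  obtain ⟨l, hlen, hnd, hch⟩ := hasPathOfLength_iff_exists_list.1 hm
  obtain ⟨i, hfirst, hlast⟩ := exists_adj_getElem_of_not_hasPathOfLength hlen hnd hch hmax
    (by have := hdeg l[0]; have := hdeg l[m]; omega)
  have : Std.Symm G.Adj := G.symm
  obtain ⟨C, hCl, hC, hclose⟩ := hch.exists_perm_cyclic_of_rel hlen i.2 hfirst hlast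
  refine ⟨l.toFinset, ⟨l[0], by simp⟩, by rw [List.toFinset_card_of_nodup hnd]; omega,
    fun a ha b hab => ?_⟩
  obtain ⟨C', hC'C, hC', ha'⟩ :=
    hC.exists_perm_head_eq hclose (hCl.mem_iff.2 (List.mem_toFinset.1 ha))
  have hC'l := hC'C.trans hCl
  have := mem_of_adj_head_of_not_hasPathOfLength (hC'l.nodup_iff.2 hnd) hC'
    (by rwa [hC'l.length_eq, hlen]) ha' hab
  exact List.mem_toFinset.2 (hC'l.mem_iff.1 this)

end LongestPath

namespace SimpleGraph

section Counting

variable [Fintype V] [DecidableEq V] [DecidableRel G.Adj]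

theorem sum_degree_eq_two_mul_card_edgeFinset_induce {T : Finset V} (hT : G.IsAdjClosed T) :
    ∑ v ∈ T, G.degree v = 2 * #(G.induce (T : Set V)).edgeFinset := by
  rw [← sum_degrees_eq_twice_card_edges, ← T.sum_coe_sort]
  refine sum_congr rfl fun v _ => ?_
  convert (degree_induce_of_neighborSet_subset fun _ hb => hT v.2 hb).symm

theorem two_mul_card_edgeFinset_eq_of_isAdjClosed {S : Finset V} (hS : G.IsAdjClosed S) :
    2 * #G.edgeFinset = ∑ v ∈ S, G.degree v + 2 * #(G.induce (↑Sᶜ : Set V)).edgeFinset := by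
  rw [← sum_degrees_eq_twice_card_edges, ← sum_add_sum_compl S,
    sum_degree_eq_two_mul_card_edgeFinset_induce (T := Sᶜ)]
  intro a ha b hab
  rw [mem_compl] at ha ⊢
  exact fun hb => ha (hS hb hab.symm)

theorem card_edgeFinset_eq_card_edgeFinset_induce_add_degree (v : V) :
    #G.edgeFinset = #(G.induce {v}ᶜ).edgeFinset + G.degree v := by
  rw [card_edgeFinset_induce_compl_singleton, card_edgeFinset_deleteIncidenceSet,
    Nat.sub_add_cancel (G.degree_le_card_edgeFinset v)]

theorem IsAdjClosed.neighborFinset_subset_erase {S : Finset V} (hS : G.IsAdjClosed S) {v : V}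
    (hv : v ∈ S) : G.neighborFinset v ⊆ S.erase v := fun b hb => by
  rw [mem_neighborFinset] at hb
  exact mem_erase.2 ⟨hb.ne', hS hv hb⟩

theorem IsAdjClosed.neighborFinset_eq_erase {S : Finset V} (hS : G.IsAdjClosed S)
    (hSc : G.IsClique (S : Set V)) {v : V} (hv : v ∈ S) : G.neighborFinset v = S.erase v :=
  (hS.neighborFinset_subset_erase hv).antisymm fun _ hb =>
    (mem_neighborFinset _ _ _).2 (hSc hv (mem_of_mem_erase hb) (ne_of_mem_erase hb).symm)

theorem IsAdjClosed.isClique_of_degree_eq {S : Finset V} (hS : G.IsAdjClosed S)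
    (hdeg : ∀ v ∈ S, G.degree v = #S - 1) : G.IsClique (S : Set V) := fun a ha b hb hab => by
  have hN := eq_of_subset_of_card_le (hS.neighborFinset_subset_erase ha)
    (by rw [card_erase_of_mem ha, card_neighborFinset_eq_degree, hdeg a ha])
  have hb' : b ∈ S.erase a := mem_erase.2 ⟨Ne.symm hab, hb⟩
  rwa [← hN, mem_neighborFinset] at hb'

end Counting

variable (G) in
/-- Equivalent to `G` being a vertex-disjoint union of copies of `K_k`. -/
def IsDisjointCliqueUnion [Fintype V] [DecidableEq V] [DecidableRel G.Adj] (k : ℕ) : Prop :=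
  ∀ v, G.IsNClique k (insert v (G.neighborFinset v))

namespace IsDisjointCliqueUnion

variable [Fintype V] [DecidableEq V] [DecidableRel G.Adj] {k : ℕ}

theorem insert_neighborFinset_eq_of_mem (h : G.IsDisjointCliqueUnion k) {a c : V}
    (hc : c ∈ insert a (G.neighborFinset a)) :
    insert c (G.neighborFinset c) = insert a (G.neighborFinset a) := by
  refine (eq_of_subset_of_card_le (fun x hx => ?_) (by rw [(h a).card_eq, (h c).card_eq])).symm
  rw [mem_insert, mem_neighborFinset]
  by_cases hxc : x = c
  · exact .inl hxc
  · exact .inr ((h a).isClique hc hx (Ne.symm hxc))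

theorem exists_partition (h : G.IsDisjointCliqueUnion k) :
    k ∣ Fintype.card V ∧
      ∃ P : Finset (Finset V),
        P.card = Fintype.card V / k ∧
        (∀ p ∈ P, p.card = k) ∧
        (∀ p ∈ P, ∀ q ∈ P, p ≠ q → Disjoint p q) ∧
        (∀ x : V, ∃ p ∈ P, x ∈ p) ∧
        (∀ a b : V, G.Adj a b ↔ a ≠ b ∧ ∃ p ∈ P, a ∈ p ∧ b ∈ p) := by
  set P := univ.image fun v => insert v (G.neighborFinset v)
  have hmem : ∀ x, insert x (G.neighborFinset x) ∈ P := fun x => mem_image_of_mem _ (mem_univ x)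
  have hparts : ∀ p ∈ P, #p = k := by
    simp only [P, mem_image]
    rintro _ ⟨a, -, rfl⟩
    exact (h a).card_eq
  have hdisj : ∀ p ∈ P, ∀ q ∈ P, p ≠ q → Disjoint p q := by
    simp only [P, mem_image]
    rintro _ ⟨a, -, rfl⟩ _ ⟨b, -, rfl⟩ hne
    refine Finset.disjoint_left.2 fun c hca hcb => hne ?_
    rw [← h.insert_neighborFinset_eq_of_mem hca, h.insert_neighborFinset_eq_of_mem hcb]
  have hcard : Fintype.card V = #P * k := by
    have hcover : P.biUnion id = univ := eq_univ_of_forall fun x =>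
      mem_biUnion.2 ⟨_, hmem x, mem_insert_self x _⟩
    rw [← card_univ, ← hcover, card_biUnion (t := id) fun p hp q hq => hdisj p hp q hq]
    exact sum_const_nat hparts
  refine ⟨hcard ▸ dvd_mul_left _ _, P, ?_, hparts, hdisj,
    fun x => ⟨_, hmem x, mem_insert_self x _⟩, fun a b => ⟨fun hab => ?_, ?_⟩⟩
  · rcases k.eq_zero_or_pos with rfl | hk
    · have : #P ≤ Fintype.card V := card_image_le
      rw [Nat.div_zero]
      omega
    · rw [hcard, Nat.mul_div_cancel _ hk]
  · exact ⟨hab.ne, _, hmem a, mem_insert_self a _, mem_insert_of_mem (by simpa using hab)⟩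
  · rintro ⟨hne, p, hp, hap, hbp⟩
    obtain ⟨c, -, rfl⟩ := mem_image.1 hp
    exact (h c).isClique hap hbp hne

theorem of_induce_compl {S : Finset V} (hS : G.IsAdjClosed S) (hSk : G.IsNClique k S)
    (h : (G.induce (↑Sᶜ : Set V)).IsDisjointCliqueUnion k) : G.IsDisjointCliqueUnion k := by
  intro v
  by_cases hv : v ∈ S
  · rwa [hS.neighborFinset_eq_erase hSk.isClique hv, insert_erase hv]
  · have := (isNClique_induce_iff _ _ _).1 (h ⟨v, by simpa using hv⟩)
    convert this using 1
    ext b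
    simp only [mem_insert, mem_neighborFinset, SetLike.coe_sort_coe, map_insert,
      Function.Embedding.subtype_apply, mem_map, comap_adj, Subtype.exists, mem_compl,
      exists_and_left, exists_prop, exists_eq_right_right]
    exact or_congr_right ⟨fun hb => ⟨hb, fun hbS => hv (hS hbS hb.symm)⟩, And.left⟩

theorem hasPathOfLength_of_adj {v u : V} (h : (G.induce {v}ᶜ).IsDisjointCliqueUnion k)
    (hvu : G.Adj v u) : HasPathOfLength G k := by
  have hT := (isNClique_induce_iff _ _ _).1 (h ⟨u, hvu.ne'⟩)
  exact hasPathOfLength_of_isNClique_of_adj hT (by simp) (by simpa using hvu.ne) hvu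

end IsDisjointCliqueUnion

section Induction

variable [Fintype V] [DecidableEq V] [DecidableRel G.Adj] {k : ℕ}

theorem two_mul_card_edgeFinset_lt_of_two_mul_degree_lt (hforb : ¬HasPathOfLength G k) {v : V}
    (hv : 2 * G.degree v < k) (hv0 : 0 < G.degree v)
    (ih : 2 * #(G.induce {v}ᶜ).edgeFinset ≤ (k - 1) * Fintype.card ↥({v}ᶜ : Set V))
    (ih_eq : 2 * #(G.induce {v}ᶜ).edgeFinset = (k - 1) * Fintype.card ↥({v}ᶜ : Set V) →
      (G.induce {v}ᶜ).IsDisjointCliqueUnion k) :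
    2 * #G.edgeFinset < (k - 1) * Fintype.card V := by
  have hlt := lt_of_le_of_ne ih fun h => by
    obtain ⟨u, hu⟩ := G.degree_pos_iff_exists_adj v |>.1 hv0
    exact hforb ((ih_eq h).hasPathOfLength_of_adj hu)
  have hcard : Fintype.card ↥({v}ᶜ : Set V) + 1 = Fintype.card V := by
    rw [Fintype.card_compl_set, Set.card_singleton]
    have := Fintype.card_pos_iff.2 ⟨v⟩
    omega
  rw [card_edgeFinset_eq_card_edgeFinset_induce_add_degree v, ← hcard, mul_add_one]
  omega

theorem two_mul_card_edgeFinset_le_of_isAdjClosed {S : Finset V} (hSne : S.Nonempty)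
    (hSk : #S ≤ k) (hS : G.IsAdjClosed S)
    (ih : 2 * #(G.induce (↑Sᶜ : Set V)).edgeFinset ≤ (k - 1) * Fintype.card ↥(↑Sᶜ : Set V))
    (ih_eq : 2 * #(G.induce (↑Sᶜ : Set V)).edgeFinset = (k - 1) * Fintype.card ↥(↑Sᶜ : Set V) →
      (G.induce (↑Sᶜ : Set V)).IsDisjointCliqueUnion k) :
    2 * #G.edgeFinset ≤ (k - 1) * Fintype.card V ∧
      (2 * #G.edgeFinset = (k - 1) * Fintype.card V → G.IsDisjointCliqueUnion k) := by
  have hdeg : ∀ v ∈ S, G.degree v ≤ #S - 1 := fun v hv => by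
    simpa [card_erase_of_mem hv] using card_le_card (hS.neighborFinset_subset_erase hv)
  have hsum : ∑ v ∈ S, G.degree v ≤ #S * (#S - 1) := by
    simpa [mul_comm] using sum_le_card_nsmul S _ _ hdeg
  have hmul : #S * (#S - 1) ≤ (k - 1) * #S := by
    rw [mul_comm]
    exact Nat.mul_le_mul_right _ (by omega)
  have hsplit :
      (k - 1) * Fintype.card V = (k - 1) * #S + (k - 1) * Fintype.card ↥(↑Sᶜ : Set V) := by
    rw [← mul_add]
    simp only [coe_sort_coe, Fintype.card_coe, card_compl, Nat.add_sub_cancel' (card_le_univ S)]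
  rw [two_mul_card_edgeFinset_eq_of_isAdjClosed hS, hsplit]
  refine ⟨by omega, fun heq => ?_⟩
  have hsumeq : ∑ v ∈ S, G.degree v = (k - 1) * #S := by omega
  have hSk' : #S = k := by
    have : (k - 1) * #S ≤ (#S - 1) * #S := by rw [← hsumeq, mul_comm (#S - 1)]; exact hsum
    have := Nat.le_of_mul_le_mul_right this hSne.card_pos
    have := hSne.card_pos
    omega
  have hdeg' : ∀ v ∈ S, G.degree v = #S - 1 := (sum_eq_sum_iff_of_le hdeg).1 <| by
    rw [sum_const, smul_eq_mul, hsumeq, hSk', mul_comm]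
  exact IsDisjointCliqueUnion.of_induce_compl hS ⟨hS.isClique_of_degree_eq hdeg', hSk'⟩
    (ih_eq (Nat.add_left_cancel (hsumeq ▸ heq)))

end Induction

theorem two_mul_card_edgeFinset_le_and_isDisjointCliqueUnion {V : Type*} [Fintype V]
    [DecidableEq V] (G : SimpleGraph V) [DecidableRel G.Adj] {k : ℕ}
    (hforb : ¬HasPathOfLength G k) :
    2 * #G.edgeFinset ≤ (k - 1) * Fintype.card V ∧
      (2 * #G.edgeFinset = (k - 1) * Fintype.card V → G.IsDisjointCliqueUnion k) := by
  induction hn : Fintype.card V using Nat.strong_induction_on generalizing V with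
  | _ n ih =>
  subst hn
  rcases isEmpty_or_nonempty V with hV | hV
  · simp only [Fintype.card_of_isEmpty, mul_zero, nonpos_iff_eq_zero, mul_eq_zero]
    exact ⟨.inr (card_eq_zero.2 (eq_empty_of_isEmpty _)), fun _ => isEmptyElim⟩
  by_cases hS : ∃ S : Finset V, S.Nonempty ∧ #S ≤ k ∧ G.IsAdjClosed S
  · obtain ⟨S, ⟨x, hx⟩, hSk, hS⟩ := hS
    obtain ⟨ih₁, ih₂⟩ := ih _ (Fintype.card_subtype_lt (x := x) (by simpa using hx))
      (G.induce (↑Sᶜ : Set V)) (fun h => hforb (h.map (Embedding.induce _))) rfl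
    exact two_mul_card_edgeFinset_le_of_isAdjClosed ⟨x, hx⟩ hSk hS ih₁ ih₂
  obtain ⟨v, hv⟩ : ∃ v, 2 * G.degree v < k := by
    by_contra! h
    exact hS (exists_isAdjClosed_of_not_hasPathOfLength hforb h)
  have hv0 : 0 < G.degree v := by
    refine Nat.pos_of_ne_zero fun h0 => hS ⟨{v}, singleton_nonempty v,
      by rw [card_singleton]; omega, ?_⟩
    simp only [IsAdjClosed, mem_singleton, forall_eq]
    exact fun b hb => absurd h0 (G.degree_pos_iff_exists_adj v |>.2 ⟨b, hb⟩).ne'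
  obtain ⟨ih₁, ih₂⟩ := ih _ (Fintype.card_subtype_lt (x := v) (by simp)) (G.induce {v}ᶜ)
    (fun h => hforb (h.map (Embedding.induce _))) rfl
  have hlt := two_mul_card_edgeFinset_lt_of_two_mul_degree_lt hforb hv hv0 ih₁ ih₂
  exact ⟨hlt.le, fun h => absurd h hlt.ne⟩

theorem two_mul_card_edgeFinset_eq_of_partition [Fintype V] [DecidableRel G.Adj] {k : ℕ}
    {P : Finset (Finset V)} (hparts : ∀ p ∈ P, #p = k)
    (hdisj : ∀ p ∈ P, ∀ q ∈ P, p ≠ q → Disjoint p q) (hcover : ∀ x : V, ∃ p ∈ P, x ∈ p)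
    (hadj : ∀ a b : V, G.Adj a b ↔ a ≠ b ∧ ∃ p ∈ P, a ∈ p ∧ b ∈ p) :
    2 * #G.edgeFinset = (k - 1) * Fintype.card V := by
  classical
  have hdeg : ∀ v, G.degree v = k - 1 := fun v => by
    obtain ⟨p, hp, hvp⟩ := hcover v
    have : G.neighborFinset v = p.erase v := by
      ext b
      rw [mem_neighborFinset, mem_erase, hadj]
      refine ⟨fun ⟨hne, q, hq, hvq, hbq⟩ => ⟨hne.symm, ?_⟩,
        fun ⟨hne, hbp⟩ => ⟨hne.symm, p, hp, hvp, hbp⟩⟩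
      by_contra hbp
      exact Finset.disjoint_left.1 (hdisj q hq p hp (by rintro rfl; exact hbp hbq)) hvq hvp
    rw [← card_neighborFinset_eq_degree, this, card_erase_of_mem hvp, hparts p hp]
  rw [← sum_degrees_eq_twice_card_edges, sum_congr rfl fun v _ => hdeg v, sum_const, card_univ,
    smul_eq_mul, mul_comm]

end SimpleGraph

end

/-- Erdős–Gallai theorem: a graph on `n` vertices with no path of length `k` has at
most `(k-1)n/2` edges, with equality iff `k ∣ n` and the graph is the vertex-disjoint
union of `n/k` complete graphs on `k` vertices. -/
theorem erdos_gallai_path {V : Type*} [Fintype V] [DecidableEq V]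
    (G : SimpleGraph V) [DecidableRel G.Adj] (k : ℕ)
    (hforb : ¬ HasPathOfLength G k) :
    2 * G.edgeFinset.card ≤ (k - 1) * Fintype.card V ∧
    (2 * G.edgeFinset.card = (k - 1) * Fintype.card V ↔
      k ∣ Fintype.card V ∧
      ∃ P : Finset (Finset V),
        P.card = Fintype.card V / k ∧
        (∀ p ∈ P, p.card = k) ∧
        (∀ p ∈ P, ∀ q ∈ P, p ≠ q → Disjoint p q) ∧
        (∀ x : V, ∃ p ∈ P, x ∈ p) ∧
        (∀ a b : V, G.Adj a b ↔ a ≠ b ∧ ∃ p ∈ P, a ∈ p ∧ b ∈ p)) := by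
  obtain ⟨hle, hextremal⟩ := G.two_mul_card_edgeFinset_le_and_isDisjointCliqueUnion hforb
  exact ⟨hle, fun heq => (hextremal heq).exists_partition,
    fun ⟨_, _, _, hparts, hdisj, hcover, hadj⟩ =>
      SimpleGraph.two_mul_card_edgeFinset_eq_of_partition hparts hdisj hcover hadj⟩
end

section
/- Let H be an n-vertex r-uniform hypergraph containing no Berge path of length k as a subgraph. If r >= k > 2, then the number of hyperedges of H is at most (k-1)n/(r+1). -/
set_option linter.unusedSectionVars false

/-- A Berge path of length `k` in a hypergraph `H`: `k+1` distinct vertices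
`v 0, …, v k` and `k` distinct hyperedges `h 0, …, h (k-1)` of `H` with
`{v i, v (i+1)} ⊆ h i` for all `i`. -/
def HasBergePath {V : Type*} (H : Finset (Finset V)) (k : ℕ) : Prop :=
  ∃ (v : Fin (k + 1) → V) (h : Fin k → Finset V),
    Function.Injective v ∧ Function.Injective h ∧
    ∀ i : Fin k, h i ∈ H ∧ v i.castSucc ∈ h i ∧ v i.succ ∈ h i

namespace GKL

variable {V : Type*} [DecidableEq V]

def GoodF (F : Finset (Finset V)) (n : ℕ) (f : ℕ → V) (g : ℕ → Finset V) : Prop :=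
  (∀ i ≤ n, ∀ j ≤ n, f i = f j → i = j) ∧
  (∀ i < n, ∀ j < n, g i = g j → i = j) ∧
  (∀ i < n, g i ∈ F ∧ f i ∈ g i ∧ f (i + 1) ∈ g i)

theorem GoodF.toBerge {F : Finset (Finset V)} {k : ℕ} {f : ℕ → V} {g : ℕ → Finset V}
    (h : GoodF F k f g) : HasBergePath F k := by
  obtain ⟨hf, hg, hc⟩ := h
  refine ⟨fun i => f i.val, fun i => g i.val, ?_, ?_, ?_⟩
  · intro i j hij
    exact Fin.ext (hf i.val (by omega) j.val (by omega) hij)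
  · intro i j hij
    exact Fin.ext (hg i.val i.isLt j.val j.isLt hij)
  · intro i
    refine ⟨(hc i.val i.isLt).1, ?_, ?_⟩
    · simpa using (hc i.val i.isLt).2.1
    · simpa using (hc i.val i.isLt).2.2

theorem GoodF.mono {F : Finset (Finset V)} {n m : ℕ} {f : ℕ → V} {g : ℕ → Finset V}
    (h : GoodF F n f g) (hmn : m ≤ n) : GoodF F m f g := by
  obtain ⟨hf, hg, hc⟩ := h
  exact ⟨fun i hi j hj => hf i (le_trans hi hmn) j (le_trans hj hmn),
    fun i hi j hj => hg i (lt_of_lt_of_le hi hmn) j (lt_of_lt_of_le hj hmn),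
    fun i hi => hc i (lt_of_lt_of_le hi hmn)⟩

theorem GoodF.rev {F : Finset (Finset V)} {n : ℕ} {f : ℕ → V} {g : ℕ → Finset V}
    (h : GoodF F n f g) :
    GoodF F n (fun i => f (n - i)) (fun i => g (n - 1 - i)) := by
  obtain ⟨hf, hg, hc⟩ := h
  refine ⟨?_, ?_, ?_⟩
  · intro i hi j hj hij
    have := hf (n - i) (by omega) (n - j) (by omega) hij
    omega
  · intro i hi j hj hij
    have := hg (n - 1 - i) (by omega) (n - 1 - j) (by omega) hij
    omega
  · intro i hi
    have h1 : n - 1 - i < n := by omega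
    obtain ⟨m1, m2, m3⟩ := hc (n - 1 - i) h1
    refine ⟨m1, ?_, ?_⟩
    · show f (n - i) ∈ g (n - 1 - i)
      have h2 : n - i = (n - 1 - i) + 1 := by omega
      rw [h2]; exact m3
    · show f (n - (i + 1)) ∈ g (n - 1 - i)
      have h2 : n - (i + 1) = n - 1 - i := by omega
      rw [h2]; exact m2

section Main

/-- **Endpoint lemma**: every edge of `F` containing the last vertex of a maximum
Berge path is an edge of that path. -/
theorem endpt {F : Finset (Finset V)} {r k ℓ : ℕ}
    (hunif : ∀ e ∈ F, e.card = r) (hk : 2 < k) (hrk : k ≤ r)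
    (hforb : ¬ HasBergePath F k)
    (hmax : ∀ n (f : ℕ → V) (g : ℕ → Finset V), GoodF F n f g → n ≤ ℓ)
    (hlk : ℓ + 1 ≤ k)
    {f : ℕ → V} {g : ℕ → Finset V} (hP : GoodF F ℓ f g) (hl1 : 1 ≤ ℓ)
    {e' : Finset V} (he'F : e' ∈ F) (hin : f ℓ ∈ e') : ∃ t < ℓ, e' = g t := by
  by_contra hcon
  push_neg at hcon
  obtain ⟨hf, hg, hc⟩ := hP
  by_cases hy : ∃ y ∈ e', ∀ i ≤ ℓ, y ≠ f i
  · -- extend the path, contradicting maximality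
    obtain ⟨y, hy1, hy2⟩ := hy
    have : GoodF F (ℓ+1) (fun i => if i = ℓ+1 then y else f i)
        (fun i => if i = ℓ then e' else g i) := by
      refine ⟨?_, ?_, ?_⟩
      · intro i hi j hj hij
        simp only [] at hij
        by_cases hi' : i = ℓ+1 <;> by_cases hj' : j = ℓ+1
        · omega
        · rw [if_pos hi', if_neg hj'] at hij
          exact ((hy2 j (by omega)) hij).elim
        · rw [if_neg hi', if_pos hj'] at hij
          exact ((hy2 i (by omega)) hij.symm).elim
        · rw [if_neg hi', if_neg hj'] at hij
          exact hf i (by omega) j (by omega) hij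
      · intro i hi j hj hij
        simp only [] at hij
        by_cases hi' : i = ℓ <;> by_cases hj' : j = ℓ
        · omega
        · rw [if_pos hi', if_neg hj'] at hij
          exact ((hcon j (by omega)) hij).elim
        · rw [if_neg hi', if_pos hj'] at hij
          exact ((hcon i (by omega)) hij.symm).elim
        · rw [if_neg hi', if_neg hj'] at hij
          exact hg i (by omega) j (by omega) hij
      · intro i hi
        simp only []
        by_cases hi' : i = ℓ
        · rw [if_pos hi', if_neg (show ¬ i = ℓ + 1 by omega),
            if_pos (show i + 1 = ℓ + 1 by omega)]
          exact ⟨he'F, by rw [hi']; exact hin, hy1⟩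
        · rw [if_neg hi', if_neg (show ¬ i = ℓ + 1 by omega),
            if_neg (show ¬ i + 1 = ℓ + 1 by omega)]
          exact hc i (by omega)
    have := hmax _ _ _ this
    omega
  · -- e' is contained in the vertex set of the path: cycle and unroll
    push_neg at hy
    set VQ : Finset V := Finset.image (fun i => f i) (Finset.range (ℓ+1)) with hVQ
    have hsub : e' ⊆ VQ := by
      intro y hyin
      obtain ⟨i, hi, rfl⟩ := hy y hyin
      exact Finset.mem_image.mpr ⟨i, Finset.mem_range.mpr (by omega), rfl⟩
    have hVQcard : VQ.card = ℓ + 1 := by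
      rw [hVQ, Finset.card_image_of_injOn, Finset.card_range]
      intro i hi j hj hij
      exact hf i (by simpa using Nat.lt_succ_iff.mp (Finset.mem_range.mp hi))
        j (by exact Nat.lt_succ_iff.mp (Finset.mem_range.mp hj)) hij
    have hrcard : e'.card = r := hunif e' he'F
    have hrl : r = ℓ + 1 := by
      have h1 : e'.card ≤ VQ.card := Finset.card_le_card hsub
      omega
    have heq : e' = VQ := Finset.eq_of_subset_of_card_le hsub (by omega)
    have hl2 : 2 ≤ ℓ := by omega
    -- g 0 has a vertex outside VQ
    have hx : ∃ x ∈ g 0, x ∉ VQ := by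
      by_contra hno
      push_neg at hno
      have : g 0 = VQ := Finset.eq_of_subset_of_card_le hno
        (by rw [hVQcard, hunif (g 0) (hc 0 (by omega)).1]; omega)
      exact hcon 0 (by omega) (heq.trans this.symm)
    obtain ⟨x, hxg, hxV⟩ := hx
    have hxf : ∀ i ≤ ℓ, x ≠ f i := by
      intro i hi hxe
      exact hxV (Finset.mem_image.mpr ⟨i, Finset.mem_range.mpr (by omega), hxe.symm⟩)
    -- build a Berge path of length k = ℓ + 1
    have hkey : GoodF F (ℓ+1) (fun i => if i = 0 then x else if i = ℓ+1 then f 0 else f i)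
        (fun i => if i = ℓ then e' else g i) := by
      refine ⟨?_, ?_, ?_⟩
      · intro i hi j hj hij
        simp only [] at hij
        by_cases hi0 : i = 0 <;> by_cases hj0 : j = 0
        · omega
        · rw [if_pos hi0, if_neg hj0] at hij
          by_cases hj1 : j = ℓ+1
          · rw [if_pos hj1] at hij
            exact ((hxf 0 (by omega)) hij).elim
          · rw [if_neg hj1] at hij
            exact ((hxf j (by omega)) hij).elim
        · rw [if_neg hi0, if_pos hj0] at hij
          by_cases hi1 : i = ℓ+1
          · rw [if_pos hi1] at hij
            exact ((hxf 0 (by omega)) hij.symm).elim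
          · rw [if_neg hi1] at hij
            exact ((hxf i (by omega)) hij.symm).elim
        · rw [if_neg hi0, if_neg hj0] at hij
          by_cases hi1 : i = ℓ+1 <;> by_cases hj1 : j = ℓ+1
          · omega
          · rw [if_pos hi1, if_neg hj1] at hij
            have := hf 0 (by omega) j (by omega) hij; omega
          · rw [if_neg hi1, if_pos hj1] at hij
            have := hf i (by omega) 0 (by omega) hij; omega
          · rw [if_neg hi1, if_neg hj1] at hij
            exact hf i (by omega) j (by omega) hij
      · intro i hi j hj hij
        simp only [] at hij
        by_cases hi' : i = ℓ <;> by_cases hj' : j = ℓ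
        · omega
        · rw [if_pos hi', if_neg hj'] at hij
          exact ((hcon j (by omega)) hij).elim
        · rw [if_neg hi', if_pos hj'] at hij
          exact ((hcon i (by omega)) hij.symm).elim
        · rw [if_neg hi', if_neg hj'] at hij
          exact hg i (by omega) j (by omega) hij
      · intro i hi
        simp only []
        by_cases hi0 : i = 0
        · rw [if_neg (show ¬ i = ℓ by omega), if_pos hi0,
            if_neg (show ¬ i + 1 = 0 by omega), if_neg (show ¬ i + 1 = ℓ + 1 by omega)]
          rw [hi0]
          exact ⟨(hc 0 (by omega)).1, hxg, (hc 0 (by omega)).2.2⟩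
        · by_cases hi' : i = ℓ
          · rw [if_pos hi', if_neg hi0, if_neg (show ¬ i = ℓ + 1 by omega),
              if_neg (show ¬ i + 1 = 0 by omega), if_pos (show i + 1 = ℓ + 1 by omega)]
            refine ⟨he'F, by rw [hi']; exact hin, ?_⟩
            rw [heq]
            exact Finset.mem_image.mpr ⟨0, Finset.mem_range.mpr (by omega), rfl⟩
          · rw [if_neg hi', if_neg hi0, if_neg (show ¬ i = ℓ + 1 by omega),
              if_neg (show ¬ i + 1 = 0 by omega), if_neg (show ¬ i + 1 = ℓ + 1 by omega)]
            exact hc i (by omega)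
    have : HasBergePath F k := by
      have hkl : k = ℓ + 1 := by omega
      exact hkl ▸ hkey.toBerge
    exact hforb this


/-- A Berge cycle with `n` edges and `n` vertices, indices mod `n`. -/
def CycF (F : Finset (Finset V)) (n : ℕ) (cf : ℕ → V) (cg : ℕ → Finset V) : Prop :=
  (∀ i < n, ∀ j < n, cf i = cf j → i = j) ∧
  (∀ i < n, ∀ j < n, cg i = cg j → i = j) ∧
  (∀ t < n, cg t ∈ F ∧ cf t ∈ cg t ∧ cf ((t + 1) % n) ∈ cg t)

-- mod helpers
theorem modsucc {n : ℕ} (hn : 0 < n) (a : ℕ) : (a % n + 1) % n = (a + 1) % n := by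
  conv_rhs => rw [← Nat.mod_add_mod]

theorem modinj {n : ℕ} (p : ℕ) {i j : ℕ} (hi : i < n) (hj : j < n)
    (h : (p + i) % n = (p + j) % n) : i = j := by
  have h1 : i % n = j % n := Nat.ModEq.add_left_cancel' p h
  rwa [Nat.mod_eq_of_lt hi, Nat.mod_eq_of_lt hj] at h1

theorem modinj' {n : ℕ} (p : ℕ) {i j : ℕ} (hi1 : 1 ≤ i) (hi : i ≤ n) (hj1 : 1 ≤ j)
    (hj : j ≤ n) (h : (p + i) % n = (p + j) % n) : i = j := by
  have h1 : i % n = j % n := Nat.ModEq.add_left_cancel' p h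
  rcases Nat.lt_or_ge i n with hi' | hi' <;> rcases Nat.lt_or_ge j n with hj' | hj'
  · rwa [Nat.mod_eq_of_lt hi', Nat.mod_eq_of_lt hj'] at h1
  · have hjn : j = n := by omega
    rw [Nat.mod_eq_of_lt hi', hjn, Nat.mod_self] at h1
    omega
  · have hin : i = n := by omega
    rw [Nat.mod_eq_of_lt hj', hin, Nat.mod_self] at h1
    omega
  · omega

/-- Spare vertex: an `r`-set has an element avoiding fewer than `r` listed vertices. -/
theorem spare {r m : ℕ} {e : Finset V} (he : e.card = r) (hm : m < r) (cf : ℕ → V) :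
    ∃ z ∈ e, ∀ q < m, z ≠ cf q := by
  have h1 : (Finset.image cf (Finset.range m)).card ≤ m := by
    calc (Finset.image cf (Finset.range m)).card ≤ (Finset.range m).card :=
          Finset.card_image_le
      _ = m := Finset.card_range m
  have h2 : (e \ Finset.image cf (Finset.range m)).Nonempty := by
    rw [← Finset.card_pos]
    have : (e ∩ Finset.image cf (Finset.range m)).card ≤ (Finset.image cf (Finset.range m)).card :=
      Finset.card_le_card Finset.inter_subset_right
    have h3 := Finset.card_sdiff_add_card_inter e (Finset.image cf (Finset.range m))
    omega
  obtain ⟨z, hz⟩ := h2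
  rw [Finset.mem_sdiff] at hz
  refine ⟨z, hz.1, fun q hq hzq => hz.2 ?_⟩
  exact Finset.mem_image.mpr ⟨q, Finset.mem_range.mpr hq, hzq.symm⟩


theorem alt {F : Finset (Finset V)} {ℓ : ℕ} {f : ℕ → V} {g : ℕ → Finset V}
    (hP : GoodF F ℓ f g) (hl1 : 1 ≤ ℓ) {w : V} (hw : w ∈ g (ℓ - 1))
    (hwf : ∀ i ≤ ℓ - 1, w ≠ f i) :
    GoodF F ℓ (fun i => if i = ℓ then w else f i) g := by
  obtain ⟨hf, hg, hc⟩ := hP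
  refine ⟨?_, hg, ?_⟩
  · intro i hi j hj hij
    simp only [] at hij
    by_cases hi' : i = ℓ <;> by_cases hj' : j = ℓ
    · omega
    · rw [if_pos hi', if_neg hj'] at hij
      exact ((hwf j (by omega)) hij).elim
    · rw [if_neg hi', if_pos hj'] at hij
      exact ((hwf i (by omega)) hij.symm).elim
    · rw [if_neg hi', if_neg hj'] at hij
      exact hf i (by omega) j (by omega) hij
  · intro i hi
    simp only []
    rw [if_neg (show ¬ i = ℓ by omega)]
    by_cases h1 : i + 1 = ℓ
    · rw [if_pos h1]
      refine ⟨(hc i hi).1, (hc i hi).2.1, ?_⟩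
      have h2 : i = ℓ - 1 := by omega
      rw [h2]; exact hw
    · rw [if_neg h1]
      exact hc i hi

theorem kill {F : Finset (Finset V)} {r k ℓ : ℕ}
    (hunif : ∀ e ∈ F, e.card = r) (hk : 2 < k) (hrk : k ≤ r)
    (hforb : ¬ HasBergePath F k)
    (hmax : ∀ n (f : ℕ → V) (g : ℕ → Finset V), GoodF F n f g → n ≤ ℓ)
    (hlk : ℓ + 1 ≤ k)
    {E : ℕ → Finset V} (hEinj : ∀ i < ℓ, ∀ j < ℓ, E i = E j → i = j) (hl2 : 2 ≤ ℓ)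
    {cf : ℕ → V} {cg : ℕ → Finset V} (hC : CycF F ℓ cf cg)
    (hsub : ∀ t < ℓ, ∃ s < ℓ, cg t = E s) :
    ∀ e' ∈ F, (∀ t < ℓ, e' ≠ E t) → ∀ x ∈ e', ∀ t < ℓ, x ∉ E t := by
  obtain ⟨hcf, hcg, hcc⟩ := hC
  intro e' he' hne x hx t ht hxE
  have hl0 : 0 < ℓ := by omega
  -- the image of cg equals the image of E
  have hEcg : ∃ s < ℓ, cg s = E t := by
    have hST : Finset.image cg (Finset.range ℓ) = Finset.image E (Finset.range ℓ) := by
      apply Finset.eq_of_subset_of_card_le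
      · intro e he
        obtain ⟨a, ha, rfl⟩ := Finset.mem_image.mp he
        obtain ⟨s, hs, hes⟩ := hsub a (Finset.mem_range.mp ha)
        exact Finset.mem_image.mpr ⟨s, Finset.mem_range.mpr hs, hes.symm⟩
      · have h1 : (Finset.image cg (Finset.range ℓ)).card = ℓ := by
          rw [Finset.card_image_of_injOn, Finset.card_range]
          intro a ha b hb hab
          exact hcg a (Finset.mem_range.mp ha) b (Finset.mem_range.mp hb) hab
        have h2 : (Finset.image E (Finset.range ℓ)).card ≤ ℓ :=
          le_trans Finset.card_image_le (le_of_eq (Finset.card_range ℓ))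
        omega
    have hmem : E t ∈ Finset.image cg (Finset.range ℓ) := by
      rw [hST]; exact Finset.mem_image.mpr ⟨t, Finset.mem_range.mpr ht, rfl⟩
    obtain ⟨s, hs, hes⟩ := Finset.mem_image.mp hmem
    exact ⟨s, Finset.mem_range.mp hs, hes⟩
  obtain ⟨s, hs, hcgs⟩ := hEcg
  have hxcg : x ∈ cg s := by rw [hcgs]; exact hxE
  -- build a maximum path with first vertex x, edges among cg values
  have hpath : ∃ (f' : ℕ → V) (g' : ℕ → Finset V), GoodF F ℓ f' g' ∧ f' 0 = x ∧
      ∀ i < ℓ, ∃ s' < ℓ, g' i = cg s' := by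
    by_cases hcfx : ∃ p < ℓ, x = cf p
    · obtain ⟨p, hp, rfl⟩ := hcfx
      obtain ⟨z, hz, hzn⟩ :=
        spare (hunif _ (hcc ((p + (ℓ-1)) % ℓ) (Nat.mod_lt _ hl0)).1) (show ℓ < r by omega) cf
      refine ⟨fun i => if i = ℓ then z else cf ((p + i) % ℓ), fun i => cg ((p + i) % ℓ),
        ⟨?_, ?_, ?_⟩, ?_, ?_⟩
      · intro i hi j hj hij
        simp only [] at hij
        by_cases hi' : i = ℓ <;> by_cases hj' : j = ℓ
        · omega
        · rw [if_pos hi', if_neg hj'] at hij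
          exact ((hzn ((p + j) % ℓ) (Nat.mod_lt _ hl0)) hij).elim
        · rw [if_neg hi', if_pos hj'] at hij
          exact ((hzn ((p + i) % ℓ) (Nat.mod_lt _ hl0)) hij.symm).elim
        · rw [if_neg hi', if_neg hj'] at hij
          exact modinj p (by omega) (by omega)
            (hcf _ (Nat.mod_lt _ hl0) _ (Nat.mod_lt _ hl0) hij)
      · intro i hi j hj hij
        simp only [] at hij
        exact modinj p hi hj (hcg _ (Nat.mod_lt _ hl0) _ (Nat.mod_lt _ hl0) hij)
      · intro i hi
        simp only []
        rw [if_neg (show ¬ i = ℓ by omega)]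
        refine ⟨(hcc _ (Nat.mod_lt _ hl0)).1, (hcc _ (Nat.mod_lt _ hl0)).2.1, ?_⟩
        by_cases h1 : i + 1 = ℓ
        · rw [if_pos h1]
          have h2 : i = ℓ - 1 := by omega
          rw [h2]; exact hz
        · rw [if_neg h1]
          have h3 := (hcc ((p + i) % ℓ) (Nat.mod_lt _ hl0)).2.2
          rw [modsucc hl0 (p + i)] at h3
          have h4 : p + i + 1 = p + (i + 1) := by omega
          rw [h4] at h3
          exact h3
      · simp only [if_neg (show ¬ 0 = ℓ by omega)]
        rw [Nat.add_zero, Nat.mod_eq_of_lt hp]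
      · intro i hi
        exact ⟨(p + i) % ℓ, Nat.mod_lt _ hl0, rfl⟩
    · push_neg at hcfx
      refine ⟨fun i => if i = 0 then x else cf ((s + i) % ℓ), fun i => cg ((s + i) % ℓ),
        ⟨?_, ?_, ?_⟩, by simp, ?_⟩
      · intro i hi j hj hij
        simp only [] at hij
        by_cases hi' : i = 0 <;> by_cases hj' : j = 0
        · omega
        · rw [if_pos hi', if_neg hj'] at hij
          exact ((hcfx ((s + j) % ℓ) (Nat.mod_lt _ hl0)) hij).elim
        · rw [if_neg hi', if_pos hj'] at hij
          exact ((hcfx ((s + i) % ℓ) (Nat.mod_lt _ hl0)) hij.symm).elim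
        · rw [if_neg hi', if_neg hj'] at hij
          exact modinj' s (by omega) hi (by omega) hj
            (hcf _ (Nat.mod_lt _ hl0) _ (Nat.mod_lt _ hl0) hij)
      · intro i hi j hj hij
        simp only [] at hij
        exact modinj s hi hj (hcg _ (Nat.mod_lt _ hl0) _ (Nat.mod_lt _ hl0) hij)
      · intro i hi
        simp only []
        refine ⟨(hcc _ (Nat.mod_lt _ hl0)).1, ?_, ?_⟩
        · by_cases hi' : i = 0
          · rw [if_pos hi', hi']
            rw [Nat.add_zero, Nat.mod_eq_of_lt hs]
            exact hxcg
          · rw [if_neg hi']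
            exact (hcc _ (Nat.mod_lt _ hl0)).2.1
        · rw [if_neg (show ¬ i + 1 = 0 by omega)]
          have h3 := (hcc ((s + i) % ℓ) (Nat.mod_lt _ hl0)).2.2
          rw [modsucc hl0 (s + i)] at h3
          have h4 : s + i + 1 = s + (i + 1) := by omega
          rw [h4] at h3
          exact h3
      · intro i hi
        exact ⟨(s + i) % ℓ, Nat.mod_lt _ hl0, rfl⟩
  obtain ⟨f', g', hQ, hQ0, hQe⟩ := hpath
  have hrev := hQ.rev
  have hlast : f' (ℓ - ℓ) = x := by rw [Nat.sub_self]; exact hQ0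
  obtain ⟨t', ht', he't⟩ := endpt hunif hk hrk hforb hmax hlk hrev (by omega) he'
    (by show f' (ℓ - ℓ) ∈ e'; rw [hlast]; exact hx)
  obtain ⟨s2, hs2, hgs2⟩ := hQe (ℓ - 1 - t') (by omega)
  obtain ⟨s3, hs3, hcgs3⟩ := hsub s2 hs2
  apply hne s3 hs3
  calc e' = g' (ℓ - 1 - t') := he't
    _ = cg s2 := hgs2
    _ = E s3 := hcgs3


/-- T1 cycle: a common vertex of the first and last edge away from the interior
vertices yields a Berge cycle through all path edges. -/
theorem t1cyc {F : Finset (Finset V)} {ℓ : ℕ} {v : ℕ → V} {E : ℕ → Finset V}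
    (hP : GoodF F ℓ v E) (hl2 : 2 ≤ ℓ) {w : V} (hw0 : w ∈ E 0) (hw1 : w ∈ E (ℓ - 1))
    (hwv : ∀ q, 1 ≤ q → q ≤ ℓ - 1 → w ≠ v q) :
    ∃ cf cg, CycF F ℓ cf cg ∧ ∀ t < ℓ, ∃ s < ℓ, cg t = E s := by
  obtain ⟨hf, hg, hc⟩ := hP
  refine ⟨fun t => if t = ℓ - 1 then w else v (t + 1),
    fun t => if t = ℓ - 1 then E 0 else E (t + 1), ⟨?_, ?_, ?_⟩, ?_⟩
  · intro a ha b hb hab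
    simp only [] at hab
    by_cases ha' : a = ℓ - 1 <;> by_cases hb' : b = ℓ - 1
    · omega
    · rw [if_pos ha', if_neg hb'] at hab
      exact ((hwv (b+1) (by omega) (by omega)) hab).elim
    · rw [if_neg ha', if_pos hb'] at hab
      exact ((hwv (a+1) (by omega) (by omega)) hab.symm).elim
    · rw [if_neg ha', if_neg hb'] at hab
      have := hf (a+1) (by omega) (b+1) (by omega) hab
      omega
  · intro a ha b hb hab
    simp only [] at hab
    by_cases ha' : a = ℓ - 1 <;> by_cases hb' : b = ℓ - 1
    · omega
    · rw [if_pos ha', if_neg hb'] at hab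
      have := hg 0 (by omega) (b+1) (by omega) hab
      omega
    · rw [if_neg ha', if_pos hb'] at hab
      have := hg (a+1) (by omega) 0 (by omega) hab
      omega
    · rw [if_neg ha', if_neg hb'] at hab
      have := hg (a+1) (by omega) (b+1) (by omega) hab
      omega
  · intro t ht
    simp only []
    by_cases ht' : t = ℓ - 1
    · rw [if_pos ht', if_pos ht']
      have h0 : (t + 1) % ℓ = 0 := by
        rw [ht']
        have : ℓ - 1 + 1 = ℓ := by omega
        rw [this, Nat.mod_self]
      rw [h0, if_neg (show ¬ (0:ℕ) = ℓ - 1 by omega)]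
      exact ⟨(hc 0 (by omega)).1, hw0, (hc 0 (by omega)).2.2⟩
    · rw [if_neg ht', if_neg ht']
      have h1 : (t + 1) % ℓ = t + 1 := Nat.mod_eq_of_lt (by omega)
      rw [h1]
      refine ⟨(hc (t+1) (by omega)).1, (hc (t+1) (by omega)).2.1, ?_⟩
      by_cases ht2 : t + 1 = ℓ - 1
      · rw [if_pos ht2]
        have h2 : t + 1 = ℓ - 1 := ht2
        rw [h2]; exact hw1
      · rw [if_neg ht2]
        exact (hc (t+1) (by omega)).2.2
  · intro t ht
    by_cases ht' : t = ℓ - 1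
    · exact ⟨0, by omega, by simp [ht']⟩
    · exact ⟨t + 1, by omega, by simp [ht']⟩

/-- T2 cycle: an alternate endpoint `w` of the last edge lying in a middle edge `E i`,
with `v (i+1) ∈ E 0`, yields a Berge cycle through all path edges. -/
theorem t2cyc {F : Finset (Finset V)} {ℓ : ℕ} {v : ℕ → V} {E : ℕ → Finset V}
    (hP : GoodF F ℓ v E) (hl2 : 2 ≤ ℓ) {i : ℕ} (hi1 : 1 ≤ i) (hi2 : i ≤ ℓ - 2)
    {w : V} (hw1 : w ∈ E (ℓ - 1)) (hw2 : w ∈ E i)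
    (hwv : ∀ q, 1 ≤ q → q ≤ ℓ - 1 → w ≠ v q)
    (hv0 : v (i + 1) ∈ E 0) :
    ∃ cf cg, CycF F ℓ cf cg ∧ ∀ t < ℓ, ∃ s < ℓ, cg t = E s := by
  obtain ⟨hf, hg, hc⟩ := hP
  refine ⟨fun t => if t = i + 1 then w else if t = 0 then v (i+1) else
      if t ≤ i then v t else v (ℓ + i + 1 - t),
    fun t => if t ≤ i then E t else if t = i + 1 then E (ℓ - 1) else E (ℓ + i - t),
    ⟨?_, ?_, ?_⟩, ?_⟩
  · -- cf injective
    intro a ha b hb hab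
    simp only [] at hab
    -- index function values are in [1, ℓ-1]; w distinct from all of them
    by_cases ha1 : a = i + 1 <;> by_cases hb1 : b = i + 1
    · omega
    · rw [if_pos ha1, if_neg hb1] at hab
      by_cases hb0 : b = 0
      · rw [if_pos hb0] at hab
        exact ((hwv (i+1) (by omega) (by omega)) hab).elim
      · rw [if_neg hb0] at hab
        by_cases hb2 : b ≤ i
        · rw [if_pos hb2] at hab
          exact ((hwv b (by omega) (by omega)) hab).elim
        · rw [if_neg hb2] at hab
          exact ((hwv (ℓ + i + 1 - b) (by omega) (by omega)) hab).elim
    · rw [if_neg ha1, if_pos hb1] at hab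
      by_cases ha0 : a = 0
      · rw [if_pos ha0] at hab
        exact ((hwv (i+1) (by omega) (by omega)) hab.symm).elim
      · rw [if_neg ha0] at hab
        by_cases ha2 : a ≤ i
        · rw [if_pos ha2] at hab
          exact ((hwv a (by omega) (by omega)) hab.symm).elim
        · rw [if_neg ha2] at hab
          exact ((hwv (ℓ + i + 1 - a) (by omega) (by omega)) hab.symm).elim
    · rw [if_neg ha1, if_neg hb1] at hab
      by_cases ha0 : a = 0 <;> by_cases hb0 : b = 0
      · omega
      all_goals (
        first
        | (rw [if_pos ha0, if_neg hb0] at hab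
           by_cases hb2 : b ≤ i
           · rw [if_pos hb2] at hab
             have := hf (i+1) (by omega) b (by omega) hab; omega
           · rw [if_neg hb2] at hab
             have := hf (i+1) (by omega) (ℓ + i + 1 - b) (by omega) hab; omega)
        | (rw [if_neg ha0, if_pos hb0] at hab
           by_cases ha2 : a ≤ i
           · rw [if_pos ha2] at hab
             have := hf a (by omega) (i+1) (by omega) hab; omega
           · rw [if_neg ha2] at hab
             have := hf (ℓ + i + 1 - a) (by omega) (i+1) (by omega) hab; omega)
        | (rw [if_neg ha0, if_neg hb0] at hab
           by_cases ha2 : a ≤ i <;> by_cases hb2 : b ≤ i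
           · rw [if_pos ha2, if_pos hb2] at hab
             have := hf a (by omega) b (by omega) hab; omega
           · rw [if_pos ha2, if_neg hb2] at hab
             have := hf a (by omega) (ℓ + i + 1 - b) (by omega) hab; omega
           · rw [if_neg ha2, if_pos hb2] at hab
             have := hf (ℓ + i + 1 - a) (by omega) b (by omega) hab; omega
           · rw [if_neg ha2, if_neg hb2] at hab
             have := hf (ℓ + i + 1 - a) (by omega) (ℓ + i + 1 - b) (by omega) hab; omega))
  · -- cg injective
    intro a ha b hb hab
    simp only [] at hab
    by_cases ha2 : a ≤ i <;> by_cases hb2 : b ≤ i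
    · rw [if_pos ha2, if_pos hb2] at hab
      exact hg a (by omega) b (by omega) hab
    · rw [if_pos ha2, if_neg hb2] at hab
      by_cases hb1 : b = i + 1
      · rw [if_pos hb1] at hab
        have := hg a (by omega) (ℓ-1) (by omega) hab; omega
      · rw [if_neg hb1] at hab
        have := hg a (by omega) (ℓ + i - b) (by omega) hab; omega
    · rw [if_neg ha2, if_pos hb2] at hab
      by_cases ha1 : a = i + 1
      · rw [if_pos ha1] at hab
        have := hg (ℓ-1) (by omega) b (by omega) hab; omega
      · rw [if_neg ha1] at hab
        have := hg (ℓ + i - a) (by omega) b (by omega) hab; omega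
    · by_cases ha1 : a = i + 1 <;> by_cases hb1 : b = i + 1
      · omega
      · rw [if_neg ha2, if_neg hb2, if_pos ha1, if_neg hb1] at hab
        have := hg (ℓ-1) (by omega) (ℓ + i - b) (by omega) hab; omega
      · rw [if_neg ha2, if_neg hb2, if_neg ha1, if_pos hb1] at hab
        have := hg (ℓ + i - a) (by omega) (ℓ-1) (by omega) hab; omega
      · rw [if_neg ha2, if_neg hb2, if_neg ha1, if_neg hb1] at hab
        have := hg (ℓ + i - a) (by omega) (ℓ + i - b) (by omega) hab; omega
  · -- cycle conditions
    intro t ht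
    simp only []
    by_cases htl : t = ℓ - 1
    · -- last step: closes at cf 0 = v (i+1)
      have h0 : (t + 1) % ℓ = 0 := by
        rw [htl]
        have h1 : ℓ - 1 + 1 = ℓ := by omega
        rw [h1, Nat.mod_self]
      rw [h0, if_neg (show ¬ (0:ℕ) = i + 1 by omega), if_pos rfl]
      by_cases hi' : i = ℓ - 2
      · rw [if_neg (show ¬ t ≤ i by omega), if_pos (show t = i + 1 by omega)]
        refine ⟨(hc (ℓ-1) (by omega)).1, ?_, ?_⟩
        · rw [if_pos (show t = i + 1 by omega)]; exact hw1
        · have h2 : i + 1 = ℓ - 1 := by omega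
          rw [h2]; exact (hc (ℓ-1) (by omega)).2.1
      · rw [if_neg (show ¬ t ≤ i by omega), if_neg (show ¬ t = i + 1 by omega)]
        have h2 : ℓ + i - t = i + 1 := by omega
        rw [h2]
        refine ⟨(hc (i+1) (by omega)).1, ?_, (hc (i+1) (by omega)).2.1⟩
        rw [if_neg (show ¬ t = i + 1 by omega), if_neg (show ¬ t = 0 by omega),
          if_neg (show ¬ t ≤ i by omega)]
        have h3 : ℓ + i + 1 - t = i + 2 := by omega
        rw [h3]
        exact (hc (i+1) (by omega)).2.2
    · have h1 : (t + 1) % ℓ = t + 1 := Nat.mod_eq_of_lt (by omega)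
      rw [h1]
      by_cases ht0 : t = 0
      · -- first step: E 0 from v (i+1) to v 1
        rw [if_pos (show t ≤ i by omega), if_neg (show ¬ t = i + 1 by omega),
          if_pos ht0, if_neg (show ¬ t + 1 = i + 1 by omega),
          if_neg (show ¬ t + 1 = 0 by omega), if_pos (show t + 1 ≤ i by omega)]
        rw [ht0]
        exact ⟨(hc 0 (by omega)).1, hv0, (hc 0 (by omega)).2.2⟩
      · by_cases hti : t ≤ i
        · -- middle ascending steps
          rw [if_pos hti, if_neg (show ¬ t = i + 1 by omega), if_neg ht0,
            if_pos hti]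
          refine ⟨(hc t (by omega)).1, (hc t (by omega)).2.1, ?_⟩
          by_cases ht3 : t = i
          · rw [if_pos (show t + 1 = i + 1 by omega)]
            rw [ht3]; exact hw2
          · rw [if_neg (show ¬ t + 1 = i + 1 by omega),
              if_neg (show ¬ t + 1 = 0 by omega), if_pos (show t + 1 ≤ i by omega)]
            exact (hc t (by omega)).2.2
        · by_cases ht4 : t = i + 1
          · -- the bridge edge E (ℓ-1)
            rw [if_neg hti, if_pos ht4, if_pos ht4,
              if_neg (show ¬ t + 1 = i + 1 by omega), if_neg (show ¬ t + 1 = 0 by omega),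
              if_neg (show ¬ t + 1 ≤ i by omega)]
            have h2 : ℓ + i + 1 - (t + 1) = ℓ - 1 := by omega
            rw [h2]
            exact ⟨(hc (ℓ-1) (by omega)).1, hw1, (hc (ℓ-1) (by omega)).2.1⟩
          · -- descending steps
            rw [if_neg hti, if_neg ht4, if_neg ht4, if_neg ht0, if_neg hti,
              if_neg (show ¬ t + 1 = i + 1 by omega), if_neg (show ¬ t + 1 = 0 by omega),
              if_neg (show ¬ t + 1 ≤ i by omega)]
            have h2 : ℓ + i + 1 - t = (ℓ + i - t) + 1 := by omega
            have h3 : ℓ + i + 1 - (t + 1) = ℓ + i - t := by omega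
            rw [h2, h3]
            exact ⟨(hc (ℓ+i-t) (by omega)).1, (hc (ℓ+i-t) (by omega)).2.2,
              (hc (ℓ+i-t) (by omega)).2.1⟩
  · intro t ht
    by_cases ht2 : t ≤ i
    · exact ⟨t, by omega, by simp [ht2]⟩
    · by_cases ht1 : t = i + 1
      · exact ⟨ℓ - 1, by omega, by simp [ht2, ht1]⟩
      · exact ⟨ℓ + i - t, by omega, by simp [ht2, ht1]⟩


/-- Two distinct `r`-sets have union of size at least `r+1`. -/
theorem unionbig {r : ℕ} {e₁ e₂ : Finset V} (h1 : e₁.card = r) (h2 : e₂.card = r)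
    (hne : e₁ ≠ e₂) : r + 1 ≤ (e₁ ∪ e₂).card := by
  by_contra hcon
  push_neg at hcon
  have hs1 : e₁ ⊆ e₁ ∪ e₂ := Finset.subset_union_left
  have hs2 : e₂ ⊆ e₁ ∪ e₂ := Finset.subset_union_right
  have he1 : e₁ = e₁ ∪ e₂ := Finset.eq_of_subset_of_card_le hs1 (by omega)
  have he2 : e₂ = e₁ ∪ e₂ := Finset.eq_of_subset_of_card_le hs2 (by omega)
  exact hne (he1.trans he2.symm)

/-- From a Berge cycle through all edges of a maximum path, produce a removable set. -/
theorem winD {F : Finset (Finset V)} {r k ℓ : ℕ}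
    (hunif : ∀ e ∈ F, e.card = r) (hk : 2 < k) (hrk : k ≤ r)
    (hforb : ¬ HasBergePath F k)
    (hmax : ∀ n (f : ℕ → V) (g : ℕ → Finset V), GoodF F n f g → n ≤ ℓ)
    (hlk : ℓ + 1 ≤ k)
    {v : ℕ → V} {E : ℕ → Finset V} (hP : GoodF F ℓ v E) (hl2 : 2 ≤ ℓ)
    (hcyc : ∃ cf cg, CycF F ℓ cf cg ∧ ∀ t < ℓ, ∃ s < ℓ, cg t = E s) :
    ∃ D ⊆ F, D.Nonempty ∧
      (r + 1) * D.card ≤ (k - 1) * ((F.sup id \ ((F \ D).sup id)).card) := by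
  obtain ⟨cf, cg, hC, hsub⟩ := hcyc
  have hkill := kill hunif hk hrk hforb hmax hlk hP.2.1 hl2 hC hsub
  set D : Finset (Finset V) := Finset.image E (Finset.range ℓ) with hD
  have hDF : D ⊆ F := by
    intro e he
    obtain ⟨t, ht, rfl⟩ := Finset.mem_image.mp he
    exact (hP.2.2 t (Finset.mem_range.mp ht)).1
  have hDne : D.Nonempty := ⟨E 0, Finset.mem_image.mpr ⟨0, Finset.mem_range.mpr (by omega), rfl⟩⟩
  refine ⟨D, hDF, hDne, ?_⟩
  have hpriv : E 0 ∪ E (ℓ - 1) ⊆ F.sup id \ ((F \ D).sup id) := by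
    intro x hx
    rw [Finset.mem_sdiff]
    constructor
    · rcases Finset.mem_union.mp hx with h | h
      · exact Finset.mem_sup.mpr ⟨E 0, (hP.2.2 0 (by omega)).1, h⟩
      · exact Finset.mem_sup.mpr ⟨E (ℓ-1), (hP.2.2 (ℓ-1) (by omega)).1, h⟩
    · intro hmem
      obtain ⟨e', he', hxe'⟩ := Finset.mem_sup.mp hmem
      rw [Finset.mem_sdiff] at he'
      have hnot : ∀ t < ℓ, e' ≠ E t := by
        intro t ht hq
        exact he'.2 (Finset.mem_image.mpr ⟨t, Finset.mem_range.mpr ht, hq.symm⟩)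
      have := hkill e' he'.1 hnot x hxe'
      rcases Finset.mem_union.mp hx with h | h
      · exact this 0 (by omega) h
      · exact this (ℓ-1) (by omega) h
  have hcard1 : r + 1 ≤ (F.sup id \ ((F \ D).sup id)).card := by
    refine le_trans ?_ (Finset.card_le_card hpriv)
    refine unionbig (hunif _ (hP.2.2 0 (by omega)).1) (hunif _ (hP.2.2 (ℓ-1) (by omega)).1) ?_
    intro hq
    have := hP.2.1 0 (by omega) (ℓ-1) (by omega) hq
    omega
  calc (r + 1) * D.card ≤ (r + 1) * ℓ := by
        have : D.card ≤ ℓ := le_trans Finset.card_image_le (le_of_eq (Finset.card_range ℓ))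
        exact Nat.mul_le_mul_left _ this
    _ ≤ (k - 1) * (r + 1) := by
        have h1 : ℓ ≤ k - 1 := by omega
        calc (r + 1) * ℓ ≤ (r + 1) * (k - 1) := Nat.mul_le_mul_left _ h1
          _ = (k - 1) * (r + 1) := Nat.mul_comm _ _
    _ ≤ (k - 1) * (F.sup id \ ((F \ D).sup id)).card := Nat.mul_le_mul_left _ hcard1

/-- One side of the final counting argument: if the arithmetic inequality for the
`A`-side holds, a removable set exists. -/
theorem sideA {F : Finset (Finset V)} {r k ℓ : ℕ}
    (hunif : ∀ e ∈ F, e.card = r) (hk : 2 < k) (hrk : k ≤ r)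
    (hforb : ¬ HasBergePath F k)
    (hmax : ∀ n (f : ℕ → V) (g : ℕ → Finset V), GoodF F n f g → n ≤ ℓ)
    (hlk : ℓ + 1 ≤ k)
    {v : ℕ → V} {E : ℕ → Finset V} (hP : GoodF F ℓ v E) (hl2 : 2 ≤ ℓ)
    (hnT1 : ∀ w, w ∈ E 0 → w ∈ E (ℓ - 1) → ∃ q, 1 ≤ q ∧ q ≤ ℓ - 1 ∧ w = v q)
    (hnT2 : ∀ i, 1 ≤ i → i ≤ ℓ - 2 → ∀ w, w ∈ E (ℓ - 1) →
      (∀ q, 1 ≤ q → q ≤ ℓ - 1 → w ≠ v q) → w ∈ E i → v (i + 1) ∉ E 0)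
    (harith : (r + 1) * (ℓ - (E 0 ∩ Finset.image v (Finset.Icc 1 (ℓ - 1))).card) ≤
      (k - 1) * (r - (E (ℓ - 1) ∩ Finset.image v (Finset.Icc 1 (ℓ - 1))).card)) :
    ∃ D ⊆ F, D.Nonempty ∧
      (r + 1) * D.card ≤ (k - 1) * ((F.sup id \ ((F \ D).sup id)).card) := by
  obtain ⟨hf, hg, hc⟩ := hP
  set mids : Finset V := Finset.image v (Finset.Icc 1 (ℓ - 1)) with hmids
  set A : Finset V := E (ℓ - 1) \ mids with hA
  -- v 0 is not in the last edge
  have hv0 : v 0 ∉ E (ℓ - 1) := by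
    intro hq
    obtain ⟨q, hq1, hq2, hq3⟩ := hnT1 (v 0) (hc 0 (by omega)).2.1 hq
    have := hf 0 (by omega) q (by omega) hq3
    omega
  -- members of A avoid all v q, q ≤ ℓ - 1
  have hAv : ∀ w ∈ A, ∀ q, q ≤ ℓ - 1 → w ≠ v q := by
    intro w hw q hq hwq
    rw [hA, Finset.mem_sdiff] at hw
    rcases Nat.eq_zero_or_pos q with h0 | h0
    · rw [h0] at hwq
      rw [hwq] at hw
      exact hv0 hw.1
    · exact hw.2 (hwq ▸ Finset.mem_image.mpr ⟨q, Finset.mem_Icc.mpr ⟨h0, hq⟩, rfl⟩)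
  -- every edge containing a member of A is a path edge
  have hS1A : ∀ w ∈ A, ∀ e' ∈ F, w ∈ e' → ∃ t < ℓ, e' = E t := by
    intro w hw e' he' hwe'
    have hwE : w ∈ E (ℓ - 1) := (Finset.mem_sdiff.mp hw).1
    have hQ := alt ⟨hf, hg, hc⟩ (by omega) hwE (fun i hi => hAv w hw i hi)
    have hlast : (fun i => if i = ℓ then w else v i) ℓ ∈ e' := by
      simp only [if_pos rfl]; exact hwe'
    exact endpt hunif hk hrk hforb hmax hlk hQ (by omega) he' hlast
  -- the host index set
  set IA : Finset ℕ := (Finset.Icc 1 (ℓ - 2)).filter (fun i => (A ∩ E i).Nonempty) with hIA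
  set D : Finset (Finset V) := insert (E (ℓ - 1)) (IA.image E) with hD
  have hDF : D ⊆ F := by
    intro e he
    rw [hD, Finset.mem_insert] at he
    rcases he with h | h
    · rw [h]; exact (hc (ℓ-1) (by omega)).1
    · obtain ⟨t, ht, rfl⟩ := Finset.mem_image.mp h
      rw [hIA, Finset.mem_filter, Finset.mem_Icc] at ht
      exact (hc t (by omega)).1
  -- A is private to D
  have hApriv : A ⊆ F.sup id \ ((F \ D).sup id) := by
    intro w hw
    rw [Finset.mem_sdiff]
    constructor
    · exact Finset.mem_sup.mpr ⟨E (ℓ-1), (hc (ℓ-1) (by omega)).1,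
        (Finset.mem_sdiff.mp hw).1⟩
    · intro hmem
      obtain ⟨e', he', hwe'⟩ := Finset.mem_sup.mp hmem
      rw [Finset.mem_sdiff] at he'
      obtain ⟨t, ht, rfl⟩ := hS1A w hw e' he'.1 hwe'
      apply he'.2
      rw [hD, Finset.mem_insert]
      rcases Nat.eq_zero_or_pos t with h0 | h0
      · -- t = 0 : then w witnesses T1, contradiction
        exfalso
        rw [h0] at hwe'
        obtain ⟨q, hq1, hq2, hq3⟩ := hnT1 w hwe' (Finset.mem_sdiff.mp hw).1
        exact hAv w hw q hq2 hq3
      · by_cases htl : t = ℓ - 1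
        · left; rw [htl]
        · right
          refine Finset.mem_image.mpr ⟨t, ?_, rfl⟩
          rw [hIA, Finset.mem_filter, Finset.mem_Icc]
          exact ⟨⟨h0, by omega⟩, ⟨w, Finset.mem_inter.mpr ⟨hw, hwe'⟩⟩⟩
  -- cardinality of IA
  have hbv : (E 0 ∩ mids).card =
      ((Finset.Icc 1 (ℓ-1)).filter (fun q => v q ∈ E 0)).card := by
    have himg : E 0 ∩ mids = Finset.image v ((Finset.Icc 1 (ℓ-1)).filter (fun q => v q ∈ E 0)) := by
      ext x
      simp only [Finset.mem_inter, hmids, Finset.mem_image, Finset.mem_filter]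
      constructor
      · rintro ⟨hx1, q, hq, rfl⟩
        exact ⟨q, ⟨hq, hx1⟩, rfl⟩
      · rintro ⟨q, ⟨hq, hqE⟩, rfl⟩
        exact ⟨hqE, q, hq, rfl⟩
    rw [himg, Finset.card_image_of_injOn]
    intro q1 hq1 q2 hq2 h12
    rw [Finset.mem_coe, Finset.mem_filter, Finset.mem_Icc] at hq1 hq2
    exact hf q1 (by omega) q2 (by omega) h12
  have hIAcard : IA.card ≤ (ℓ - 1) - (E 0 ∩ mids).card := by
    rw [hbv]
    have hmaps : ∀ i ∈ IA, i + 1 ∈ (Finset.Icc 1 (ℓ-1)).filter (fun q => v q ∉ E 0) := by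
      intro i hi
      rw [hIA, Finset.mem_filter, Finset.mem_Icc] at hi
      obtain ⟨⟨hi1, hi2⟩, w, hwmem⟩ := hi
      rw [Finset.mem_inter] at hwmem
      rw [Finset.mem_filter, Finset.mem_Icc]
      refine ⟨⟨by omega, by omega⟩, ?_⟩
      exact hnT2 i hi1 hi2 w (Finset.mem_sdiff.mp hwmem.1).1
        (fun q hq1 hq2 => hAv w hwmem.1 q hq2) hwmem.2
    have hinj : ∀ i ∈ IA, ∀ j ∈ IA, i + 1 = j + 1 → i = j := fun i _ j _ h => by omega
    have h1 : IA.card ≤ ((Finset.Icc 1 (ℓ-1)).filter (fun q => v q ∉ E 0)).card :=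
      Finset.card_le_card_of_injOn (fun i => i + 1) hmaps hinj
    have h2 := Finset.card_filter_add_card_filter_not
      (s := Finset.Icc 1 (ℓ-1)) (p := fun q => v q ∈ E 0)
    rw [Nat.card_Icc] at h2
    omega
  have hDcard : D.card ≤ ℓ - (E 0 ∩ mids).card := by
    have h1 : D.card ≤ (IA.image E).card + 1 := Finset.card_insert_le _ _
    have h2 : (IA.image E).card ≤ IA.card := Finset.card_image_le
    have h3 : (E 0 ∩ mids).card ≤ ℓ - 1 := by
      calc (E 0 ∩ mids).card ≤ mids.card := Finset.card_le_card Finset.inter_subset_right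
        _ ≤ (Finset.Icc 1 (ℓ-1)).card := Finset.card_image_le
        _ = ℓ - 1 := by rw [Nat.card_Icc]; omega
    omega
  have hAcard : A.card = r - (E (ℓ-1) ∩ mids).card := by
    have h1 := Finset.card_sdiff_add_card_inter (E (ℓ-1)) mids
    have h2 : (E (ℓ-1)).card = r := hunif _ (hc (ℓ-1) (by omega)).1
    rw [hA]
    omega
  refine ⟨D, hDF, ⟨E (ℓ-1), Finset.mem_insert_self _ _⟩, ?_⟩
  calc (r + 1) * D.card ≤ (r + 1) * (ℓ - (E 0 ∩ mids).card) := Nat.mul_le_mul_left _ hDcard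
    _ ≤ (k - 1) * (r - (E (ℓ-1) ∩ mids).card) := harith
    _ = (k - 1) * A.card := by rw [hAcard]
    _ ≤ (k - 1) * ((F.sup id \ ((F \ D).sup id)).card) :=
        Nat.mul_le_mul_left _ (Finset.card_le_card hApriv)


/-- The arithmetic dichotomy in the chord-heavy case. -/
theorem arith {r k ℓ a b : ℕ} (hk : 2 < k) (hrk : k ≤ r) (hl2 : 2 ≤ ℓ) (hlk : ℓ + 1 ≤ k)
    (ha1 : 1 ≤ a) (ha2 : a ≤ ℓ - 1) (hb1 : 1 ≤ b) (hb2 : b ≤ ℓ - 1) (hab : r ≤ a + b) :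
    (r + 1) * (ℓ - b) ≤ (k - 1) * (r - a) ∨ (r + 1) * (ℓ - a) ≤ (k - 1) * (r - b) := by
  by_contra hcon
  push_neg at hcon
  obtain ⟨h1, h2⟩ := hcon
  have har : a ≤ r := by omega
  have hbr : b ≤ r := by omega
  have hbl : b ≤ ℓ := by omega
  have hal : a ≤ ℓ := by omega
  have hk1 : 1 ≤ k := by omega
  zify [har, hbr, hbl, hal, hk1] at h1 h2
  have e1 : (0:ℤ) ≤ ((a:ℤ) + b - r) * ((r:ℤ) - k + 2) := by
    apply mul_nonneg
    · have : (r:ℤ) ≤ (a:ℤ) + b := by exact_mod_cast hab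
      omega
    · have : (k:ℤ) ≤ (r:ℤ) := by exact_mod_cast hrk
      omega
  have e2 : (0:ℤ) ≤ ((r:ℤ) + 1) * (2*((k:ℤ)-1) - 2*ℓ) := by
    apply mul_nonneg
    · positivity
    · have : (ℓ:ℤ) + 1 ≤ (k:ℤ) := by exact_mod_cast hlk
      omega
  have e3 : (0:ℤ) ≤ ((r:ℤ) - k) * ((r:ℤ) + 2) := by
    apply mul_nonneg
    · have : (k:ℤ) ≤ (r:ℤ) := by exact_mod_cast hrk
      omega
    · positivity
  nlinarith [h1, h2, e1, e2, e3]

/-- Every edge through a vertex of `E (ℓ-1) \ mids` is a path edge. -/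
theorem privA {F : Finset (Finset V)} {r k ℓ : ℕ}
    (hunif : ∀ e ∈ F, e.card = r) (hk : 2 < k) (hrk : k ≤ r)
    (hforb : ¬ HasBergePath F k)
    (hmax : ∀ n (f : ℕ → V) (g : ℕ → Finset V), GoodF F n f g → n ≤ ℓ)
    (hlk : ℓ + 1 ≤ k)
    {v : ℕ → V} {E : ℕ → Finset V} (hP : GoodF F ℓ v E) (hl2 : 2 ≤ ℓ)
    (hnT1 : ∀ w, w ∈ E 0 → w ∈ E (ℓ - 1) → ∃ q, 1 ≤ q ∧ q ≤ ℓ - 1 ∧ w = v q) :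
    ∀ w ∈ E (ℓ - 1) \ Finset.image v (Finset.Icc 1 (ℓ - 1)),
      ∀ e' ∈ F, w ∈ e' → ∃ t < ℓ, e' = E t := by
  obtain ⟨hf, hg, hc⟩ := hP
  have hv0 : v 0 ∉ E (ℓ - 1) := by
    intro hq
    obtain ⟨q, hq1, hq2, hq3⟩ := hnT1 (v 0) (hc 0 (by omega)).2.1 hq
    have := hf 0 (by omega) q (by omega) hq3
    omega
  intro w hw e' he' hwe'
  rw [Finset.mem_sdiff] at hw
  have hAv : ∀ q, q ≤ ℓ - 1 → w ≠ v q := by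
    intro q hq hwq
    rcases Nat.eq_zero_or_pos q with h0 | h0
    · rw [h0] at hwq
      rw [hwq] at hw
      exact hv0 hw.1
    · exact hw.2 (hwq ▸ Finset.mem_image.mpr ⟨q, Finset.mem_Icc.mpr ⟨h0, hq⟩, rfl⟩)
  have hQ := alt ⟨hf, hg, hc⟩ (by omega) hw.1 (fun i hi => hAv i hi)
  have hlast : (fun i => if i = ℓ then w else v i) ℓ ∈ e' := by
    simp only [if_pos rfl]; exact hwe'
  exact endpt hunif hk hrk hforb hmax hlk hQ (by omega) he' hlast


theorem removal_lemma {F : Finset (Finset V)} {r k : ℕ}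
    (hunif : ∀ e ∈ F, e.card = r) (hk : 2 < k) (hrk : k ≤ r)
    (hforb : ¬ HasBergePath F k) (hne : F.Nonempty) :
    ∃ D ⊆ F, D.Nonempty ∧
      (r + 1) * D.card ≤ (k - 1) * ((F.sup id \ ((F \ D).sup id)).card) := by
  classical
  have hr3 : 3 ≤ r := by omega
  obtain ⟨e0, he0⟩ := hne
  have he0card : 1 < e0.card := by rw [hunif e0 he0]; omega
  obtain ⟨x0, hx0, y0, hy0, hxy0⟩ := Finset.one_lt_card.mp he0card
  have hBP1 : ∃ (f : ℕ → V) (g : ℕ → Finset V), GoodF F 1 f g := by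
    refine ⟨fun i => if i = 0 then x0 else y0, fun _ => e0, ?_, ?_, ?_⟩
    · intro i hi j hj hij
      simp only [] at hij
      by_cases hi' : i = 0 <;> by_cases hj' : j = 0
      · omega
      · rw [if_pos hi', if_neg hj'] at hij; exact (hxy0 hij).elim
      · rw [if_neg hi', if_pos hj'] at hij; exact (hxy0 hij.symm).elim
      · omega
    · intro i hi j hj _; omega
    · intro i hi
      have hi0 : i = 0 := by omega
      subst hi0
      exact ⟨he0, by simp [hx0], by simp [hy0]⟩
  have hub : ∀ n (f : ℕ → V) (g : ℕ → Finset V), GoodF F n f g → n + 1 ≤ k := by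
    intro n f g h
    by_contra hq
    exact hforb (GoodF.toBerge (h.mono (by omega)))
  set ℓ : ℕ := Nat.findGreatest (fun n => ∃ (f : ℕ → V) (g : ℕ → Finset V), GoodF F n f g) k
    with hℓdef
  have hmax : ∀ n (f : ℕ → V) (g : ℕ → Finset V), GoodF F n f g → n ≤ ℓ := by
    intro n f g h
    exact Nat.le_findGreatest (by have := hub n f g h; omega) ⟨f, g, h⟩
  have hl1 : 1 ≤ ℓ := by
    obtain ⟨f, g, h⟩ := hBP1
    exact hmax 1 f g h
  have hBPl : ∃ (f : ℕ → V) (g : ℕ → Finset V), GoodF F ℓ f g := by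
    rw [hℓdef]
    exact Nat.findGreatest_spec (P := fun n => ∃ (f : ℕ → V) (g : ℕ → Finset V), GoodF F n f g)
      (by omega : 1 ≤ k) hBP1
  obtain ⟨v, E, hP⟩ := hBPl
  have hlk : ℓ + 1 ≤ k := hub ℓ v E hP
  obtain ⟨hf, hg, hc⟩ := id hP
  rcases Nat.lt_or_ge ℓ 2 with hl2 | hl2
  · -- ℓ = 1 : the edge E 0 is isolated
    have hdisj : ∀ e' ∈ F, e' ≠ E 0 → ∀ x ∈ e', x ∉ E 0 := by
      intro e' he' hne' x hx hxE
      have hE0card : (E 0).card = r := hunif _ (hc 0 (by omega)).1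
      have he'card : e'.card = r := hunif _ he'
      have h1 : (E 0 \ {x}).Nonempty := by
        rw [← Finset.card_pos]
        have h2 := Finset.card_sdiff_add_card_inter (E 0) {x}
        have h3 : ((E 0) ∩ {x}).card ≤ 1 := by
          calc ((E 0) ∩ {x}).card ≤ ({x} : Finset V).card :=
                Finset.card_le_card Finset.inter_subset_right
            _ = 1 := Finset.card_singleton x
        omega
      obtain ⟨a, ha⟩ := h1
      rw [Finset.mem_sdiff, Finset.mem_singleton] at ha
      have h2 : (e' \ {x, a}).Nonempty := by
        rw [← Finset.card_pos]
        have h3 := Finset.card_sdiff_add_card_inter e' {x, a}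
        have h4 : (e' ∩ {x, a}).card ≤ 2 := by
          calc (e' ∩ {x, a}).card ≤ ({x, a} : Finset V).card :=
                Finset.card_le_card Finset.inter_subset_right
            _ ≤ 2 := le_trans (Finset.card_insert_le _ _) (by simp)
        omega
      obtain ⟨b, hb⟩ := h2
      rw [Finset.mem_sdiff, Finset.mem_insert, Finset.mem_singleton] at hb
      push_neg at hb
      obtain ⟨hbe, hbx, hba⟩ := hb
      have h2p : GoodF F 2 (fun i => if i = 0 then a else if i = 1 then x else b)
          (fun i => if i = 0 then E 0 else e') := by
        refine ⟨?_, ?_, ?_⟩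
        · intro i hi j hj hij
          simp only [] at hij
          rcases (by omega : i = 0 ∨ i = 1 ∨ i = 2) with hi' | hi' | hi' <;>
            rcases (by omega : j = 0 ∨ j = 1 ∨ j = 2) with hj' | hj' | hj' <;>
            subst hi' <;> subst hj' <;> norm_num at hij ⊢ <;>
            first
            | exact absurd hij ha.2
            | exact absurd hij.symm ha.2
            | exact absurd hij hba
            | exact absurd hij.symm hba
            | exact absurd hij hbx
            | exact absurd hij.symm hbx
        · intro i hi j hj hij
          simp only [] at hij
          by_cases hi0 : i = 0 <;> by_cases hj0 : j = 0
          · omega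
          · rw [if_pos hi0, if_neg hj0] at hij; exact absurd hij.symm hne'
          · rw [if_neg hi0, if_pos hj0] at hij; exact absurd hij hne'
          · omega
        · intro i hi
          simp only []
          by_cases hi0 : i = 0
          · rw [if_pos hi0, if_pos hi0, if_neg (show ¬ i + 1 = 0 by omega),
              if_pos (show i + 1 = 1 by omega)]
            exact ⟨(hc 0 (by omega)).1, ha.1, hxE⟩
          · rw [if_neg hi0, if_neg hi0, if_pos (show i = 1 by omega),
              if_neg (show ¬ i + 1 = 0 by omega), if_neg (show ¬ i + 1 = 1 by omega)]
            exact ⟨he', hx, hbe⟩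
      have := hmax 2 _ _ h2p
      omega
    refine ⟨{E 0}, ?_, ⟨E 0, Finset.mem_singleton_self _⟩, ?_⟩
    · rw [Finset.singleton_subset_iff]; exact (hc 0 (by omega)).1
    · have hpriv : E 0 ⊆ F.sup id \ ((F \ {E 0}).sup id) := by
        intro x hx
        rw [Finset.mem_sdiff]
        constructor
        · exact Finset.mem_sup.mpr ⟨E 0, (hc 0 (by omega)).1, hx⟩
        · intro hmem
          obtain ⟨e', he', hxe'⟩ := Finset.mem_sup.mp hmem
          rw [Finset.mem_sdiff, Finset.mem_singleton] at he'
          exact hdisj e' he'.1 he'.2 x hxe' hx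
      have h1 : r ≤ (F.sup id \ ((F \ {E 0}).sup id)).card := by
        calc r = (E 0).card := (hunif _ (hc 0 (by omega)).1).symm
          _ ≤ _ := Finset.card_le_card hpriv
      have h2 : 2 * r ≤ (k - 1) * r := Nat.mul_le_mul_right r (by omega)
      calc (r + 1) * ({E 0} : Finset (Finset V)).card = r + 1 := by
            rw [Finset.card_singleton, Nat.mul_one]
        _ ≤ (k - 1) * r := by omega
        _ ≤ (k - 1) * (F.sup id \ ((F \ {E 0}).sup id)).card := Nat.mul_le_mul_left _ h1
  · -- main case : ℓ ≥ 2
    by_cases hT1 : ∃ w, w ∈ E 0 ∧ w ∈ E (ℓ - 1) ∧ ∀ q, 1 ≤ q → q ≤ ℓ - 1 → w ≠ v q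
    · obtain ⟨w, h1, h2, h3⟩ := hT1
      exact winD hunif hk hrk hforb hmax hlk hP hl2 (t1cyc hP hl2 h1 h2 h3)
    push_neg at hT1
    by_cases hT2 : ∃ i, 1 ≤ i ∧ i ≤ ℓ - 2 ∧ ∃ w, w ∈ E (ℓ - 1) ∧
        (∀ q, 1 ≤ q → q ≤ ℓ - 1 → w ≠ v q) ∧ w ∈ E i ∧ v (i + 1) ∈ E 0
    · obtain ⟨i, hi1, hi2, w, hw1, hw2, hw3, hw4⟩ := hT2
      exact winD hunif hk hrk hforb hmax hlk hP hl2 (t2cyc hP hl2 hi1 hi2 hw1 hw3 hw2 hw4)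
    by_cases hT2' : ∃ i, 1 ≤ i ∧ i ≤ ℓ - 2 ∧ ∃ w, w ∈ E 0 ∧
        (∀ q, 1 ≤ q → q ≤ ℓ - 1 → w ≠ v q) ∧ w ∈ E i ∧ v i ∈ E (ℓ - 1)
    · -- use the reversed path
      obtain ⟨i, hi1, hi2, w, hw1, hw2, hw3, hw4⟩ := hT2'
      have hPrev := hP.rev
      have hcyc := t2cyc hPrev hl2 (i := ℓ - 1 - i) (by omega) (by omega)
        (w := w) ?_ ?_ ?_ ?_
      rotate_left
      · show w ∈ E (ℓ - 1 - (ℓ - 1))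
        rw [Nat.sub_self]; exact hw1
      · show w ∈ E (ℓ - 1 - (ℓ - 1 - i))
        rw [show ℓ - 1 - (ℓ - 1 - i) = i by omega]; exact hw3
      · intro q hq1 hq2
        show w ≠ v (ℓ - q)
        exact hw2 (ℓ - q) (by omega) (by omega)
      · show v (ℓ - (ℓ - 1 - i + 1)) ∈ E (ℓ - 1 - 0)
        rw [show ℓ - (ℓ - 1 - i + 1) = i by omega, Nat.sub_zero]
        exact hw4
      obtain ⟨cf, cg, hC, hsub⟩ := hcyc
      refine winD hunif hk hrk hforb hmax hlk hP hl2 ⟨cf, cg, hC, ?_⟩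
      intro t ht
      obtain ⟨s, hs, hcgs⟩ := hsub t ht
      exact ⟨ℓ - 1 - s, by omega, hcgs⟩
    push_neg at hT2 hT2'
    -- counting
    set mids : Finset V := Finset.image v (Finset.Icc 1 (ℓ - 1)) with hmids
    have hmidsrev : Finset.image (fun i => v (ℓ - i)) (Finset.Icc 1 (ℓ - 1)) = mids := by
      rw [hmids]
      ext x
      simp only [Finset.mem_image, Finset.mem_Icc]
      constructor
      · rintro ⟨q, ⟨hq1, hq2⟩, rfl⟩
        exact ⟨ℓ - q, ⟨by omega, by omega⟩, rfl⟩
      · rintro ⟨q, ⟨hq1, hq2⟩, rfl⟩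
        refine ⟨ℓ - q, ⟨by omega, by omega⟩, ?_⟩
        rw [show ℓ - (ℓ - q) = q by omega]
    have hnT1rev : ∀ w, w ∈ (fun i => E (ℓ - 1 - i)) 0 → w ∈ (fun i => E (ℓ - 1 - i)) (ℓ - 1) →
        ∃ q, 1 ≤ q ∧ q ≤ ℓ - 1 ∧ w = (fun i => v (ℓ - i)) q := by
      intro w h1 h2
      simp only [] at h1 h2
      rw [Nat.sub_zero] at h1
      rw [Nat.sub_self] at h2
      obtain ⟨q, hq1, hq2, hq3⟩ := hT1 w h2 h1
      refine ⟨ℓ - q, by omega, by omega, ?_⟩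
      show w = v (ℓ - (ℓ - q))
      rw [show ℓ - (ℓ - q) = q by omega]
      exact hq3
    have hacard : (E (ℓ-1) ∩ mids).card ≤ ℓ - 1 := by
      calc (E (ℓ-1) ∩ mids).card ≤ mids.card := Finset.card_le_card Finset.inter_subset_right
        _ ≤ (Finset.Icc 1 (ℓ-1)).card := Finset.card_image_le
        _ = ℓ - 1 := by rw [Nat.card_Icc]; omega
    have hbcard : (E 0 ∩ mids).card ≤ ℓ - 1 := by
      calc (E 0 ∩ mids).card ≤ mids.card := Finset.card_le_card Finset.inter_subset_right
        _ ≤ (Finset.Icc 1 (ℓ-1)).card := Finset.card_image_le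
        _ = ℓ - 1 := by rw [Nat.card_Icc]; omega
    have ha1 : 1 ≤ (E (ℓ-1) ∩ mids).card := by
      rw [Nat.one_le_iff_ne_zero, ← Nat.pos_iff_ne_zero, Finset.card_pos]
      refine ⟨v (ℓ-1), Finset.mem_inter.mpr ⟨(hc (ℓ-1) (by omega)).2.1, ?_⟩⟩
      exact Finset.mem_image.mpr ⟨ℓ-1, Finset.mem_Icc.mpr ⟨by omega, le_refl _⟩, rfl⟩
    have hb1 : 1 ≤ (E 0 ∩ mids).card := by
      rw [Nat.one_le_iff_ne_zero, ← Nat.pos_iff_ne_zero, Finset.card_pos]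
      refine ⟨v 1, Finset.mem_inter.mpr ⟨(hc 0 (by omega)).2.2, ?_⟩⟩
      exact Finset.mem_image.mpr ⟨1, Finset.mem_Icc.mpr ⟨le_refl _, by omega⟩, rfl⟩
    rcases Nat.lt_or_ge ((E (ℓ-1) ∩ mids).card + (E 0 ∩ mids).card) r with hab | hab
    · -- few chords : remove all path edges, A ∪ B is private
      have hprivB : ∀ w ∈ E 0 \ mids, ∀ e' ∈ F, w ∈ e' → ∃ t < ℓ, e' = E t := by
        intro w hw e' he' hwe'
        have hwmem : w ∈ (fun i => E (ℓ - 1 - i)) (ℓ - 1) \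
            Finset.image (fun i => v (ℓ - i)) (Finset.Icc 1 (ℓ - 1)) := by
          rw [Finset.mem_sdiff]
          constructor
          · show w ∈ E (ℓ - 1 - (ℓ - 1))
            rw [Nat.sub_self]
            exact (Finset.mem_sdiff.mp hw).1
          · rw [hmidsrev]
            exact (Finset.mem_sdiff.mp hw).2
        obtain ⟨t, ht, rfl⟩ := privA hunif hk hrk hforb hmax hlk hP.rev hl2 hnT1rev
          w hwmem e' he' hwe'
        exact ⟨ℓ - 1 - t, by omega, rfl⟩
      have hprivA' := privA hunif hk hrk hforb hmax hlk hP hl2 hT1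
      set D : Finset (Finset V) := Finset.image E (Finset.range ℓ) with hD
      have hDF : D ⊆ F := by
        intro e he
        obtain ⟨t, ht, rfl⟩ := Finset.mem_image.mp he
        exact (hc t (Finset.mem_range.mp ht)).1
      refine ⟨D, hDF, ⟨E 0, Finset.mem_image.mpr ⟨0, Finset.mem_range.mpr (by omega), rfl⟩⟩, ?_⟩
      have hABpriv : (E (ℓ-1) \ mids) ∪ (E 0 \ mids) ⊆ F.sup id \ ((F \ D).sup id) := by
        intro w hw
        rw [Finset.mem_sdiff]
        constructor
        · rcases Finset.mem_union.mp hw with h | h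
          · exact Finset.mem_sup.mpr ⟨E (ℓ-1), (hc (ℓ-1) (by omega)).1,
              (Finset.mem_sdiff.mp h).1⟩
          · exact Finset.mem_sup.mpr ⟨E 0, (hc 0 (by omega)).1, (Finset.mem_sdiff.mp h).1⟩
        · intro hmem
          obtain ⟨e', he', hwe'⟩ := Finset.mem_sup.mp hmem
          rw [Finset.mem_sdiff] at he'
          have : ∃ t < ℓ, e' = E t := by
            rcases Finset.mem_union.mp hw with h | h
            · exact hprivA' w h e' he'.1 hwe'
            · exact hprivB w h e' he'.1 hwe'
          obtain ⟨t, ht, rfl⟩ := this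
          exact he'.2 (Finset.mem_image.mpr ⟨t, Finset.mem_range.mpr ht, rfl⟩)
      have hdisjAB : Disjoint (E (ℓ-1) \ mids) (E 0 \ mids) := by
        rw [Finset.disjoint_left]
        intro w h1 h2
        obtain ⟨q, hq1, hq2, hq3⟩ := hT1 w (Finset.mem_sdiff.mp h2).1 (Finset.mem_sdiff.mp h1).1
        exact (Finset.mem_sdiff.mp h1).2
          (hq3 ▸ Finset.mem_image.mpr ⟨q, Finset.mem_Icc.mpr ⟨hq1, hq2⟩, rfl⟩)
      have hcardu : r + 1 ≤ ((E (ℓ-1) \ mids) ∪ (E 0 \ mids)).card := by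
        rw [Finset.card_union_of_disjoint hdisjAB]
        have h1 := Finset.card_sdiff_add_card_inter (E (ℓ-1)) mids
        have h2 := Finset.card_sdiff_add_card_inter (E 0) mids
        rw [hunif _ (hc (ℓ-1) (by omega)).1] at h1
        rw [hunif _ (hc 0 (by omega)).1] at h2
        omega
      calc (r + 1) * D.card ≤ (r + 1) * ℓ := by
            have : D.card ≤ ℓ := le_trans Finset.card_image_le (le_of_eq (Finset.card_range ℓ))
            exact Nat.mul_le_mul_left _ this
        _ ≤ (k - 1) * (r + 1) := by
            have h1 : ℓ ≤ k - 1 := by omega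
            calc (r + 1) * ℓ ≤ (r + 1) * (k - 1) := Nat.mul_le_mul_left _ h1
              _ = (k - 1) * (r + 1) := Nat.mul_comm _ _
        _ ≤ (k - 1) * ((F.sup id \ ((F \ D).sup id)).card) := by
            refine Nat.mul_le_mul_left _ (le_trans hcardu (Finset.card_le_card hABpriv))
    · -- many chords : arithmetic dichotomy
      rcases arith hk hrk hl2 hlk ha1 hacard hb1 hbcard hab with h | h
      · exact sideA hunif hk hrk hforb hmax hlk hP hl2 hT1 hT2 h
      · -- reversed side
        have hnT2rev : ∀ i, 1 ≤ i → i ≤ ℓ - 2 → ∀ w, w ∈ (fun t => E (ℓ - 1 - t)) (ℓ - 1) →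
            (∀ q, 1 ≤ q → q ≤ ℓ - 1 → w ≠ (fun t => v (ℓ - t)) q) →
            w ∈ (fun t => E (ℓ - 1 - t)) i → (fun t => v (ℓ - t)) (i + 1) ∉ (fun t => E (ℓ - 1 - t)) 0 := by
          intro i h1 h2 w hw hwv hwE
          simp only [] at hw hwv hwE ⊢
          rw [Nat.sub_self] at hw
          rw [Nat.sub_zero]
          rw [show ℓ - (i + 1) = ℓ - 1 - i by omega]
          refine hT2' (ℓ - 1 - i) (by omega) (by omega) w hw ?_ hwE
          intro q hq1 hq2 hwq
          exact hwv (ℓ - q) (by omega) (by omega)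
            (by rw [show ℓ - (ℓ - q) = q by omega]; exact hwq)
        have harith2 : (r + 1) * (ℓ - ((fun t => E (ℓ - 1 - t)) 0 ∩
              Finset.image (fun t => v (ℓ - t)) (Finset.Icc 1 (ℓ - 1))).card) ≤
            (k - 1) * (r - ((fun t => E (ℓ - 1 - t)) (ℓ - 1) ∩
              Finset.image (fun t => v (ℓ - t)) (Finset.Icc 1 (ℓ - 1))).card) := by
          simp only [hmidsrev]
          rw [Nat.sub_zero, Nat.sub_self]
          exact h
        exact sideA hunif hk hrk hforb hmax hlk hP.rev hl2 hnT1rev hnT2rev harith2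


theorem bergePath_mono {F F' : Finset (Finset V)} {k : ℕ} (hsub : F' ⊆ F) :
    HasBergePath F' k → HasBergePath F k := by
  rintro ⟨v, h, hv, hh, hcond⟩
  exact ⟨v, h, hv, hh, fun i => ⟨hsub (hcond i).1, (hcond i).2.1, (hcond i).2.2⟩⟩

theorem main_ineq {r k : ℕ} (hk : 2 < k) (hrk : k ≤ r) :
    ∀ F : Finset (Finset V), (∀ e ∈ F, e.card = r) → ¬ HasBergePath F k →
      (r + 1) * F.card ≤ (k - 1) * (F.sup id).card := by
  intro F
  induction F using Finset.strongInduction with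
  | _ F ih =>
    intro hunif hforb
    rcases F.eq_empty_or_nonempty with rfl | hne
    · simp
    obtain ⟨D, hDsub, hDne, hbound⟩ := removal_lemma hunif hk hrk hforb hne
    have hssub : F \ D ⊂ F := by
      obtain ⟨e, he⟩ := hDne
      refine Finset.sdiff_ssubset hDsub ⟨e, he⟩
    have hIH : (r+1) * (F \ D).card ≤ (k-1) * ((F \ D).sup id).card :=
      ih _ hssub (fun e he => hunif e (Finset.mem_sdiff.mp he).1)
        (fun hp => hforb (bergePath_mono Finset.sdiff_subset hp))
    have hsup : (F \ D).sup id ⊆ F.sup id := Finset.sup_mono Finset.sdiff_subset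
    have hcards : ((F.sup id \ ((F \ D).sup id)).card) + ((F \ D).sup id).card
        = (F.sup id).card := Finset.card_sdiff_add_card_eq_card hsup
    have hcardF : D.card + (F \ D).card = F.card := by
      have := Finset.card_sdiff_add_card_eq_card hDsub
      omega
    calc (r+1) * F.card = (r+1) * D.card + (r+1) * (F \ D).card := by
          rw [← hcardF, Nat.mul_add]
      _ ≤ (k-1) * ((F.sup id \ ((F \ D).sup id)).card) + (k-1) * ((F \ D).sup id).card :=
          Nat.add_le_add hbound hIH
      _ = (k-1) * (F.sup id).card := by rw [← Nat.mul_add, hcards]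

end Main

end GKL

/-- Győri–Katona–Lemons: an `n`-vertex `r`-uniform hypergraph with no Berge path of
length `k`, where `r ≥ k > 2`, has at most `(k-1)n/(r+1)` hyperedges. -/
theorem gyori_katona_lemons_long_edges {V : Type*} [Fintype V] [DecidableEq V]
    (H : Finset (Finset V)) (r k : ℕ)
    (hunif : ∀ e ∈ H, e.card = r)
    (hk : 2 < k) (hrk : k ≤ r)
    (hforb : ¬ HasBergePath H k) :
    (r + 1) * H.card ≤ (k - 1) * Fintype.card V := by
  calc (r + 1) * H.card ≤ (k - 1) * (H.sup id).card :=
        GKL.main_ineq hk hrk H hunif hforb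
    _ ≤ (k - 1) * Fintype.card V :=
        Nat.mul_le_mul_left _ (Finset.card_le_univ _)
end

section
/- Suppose there exists a Steiner triple system on k vertices, and let n be a positive multiple of k. Then there exists an n-vertex 3-uniform linear hypergraph H containing no Berge path of length k whose number of hyperedges is exactly (k-1)n/6; for instance, the vertex-disjoint union of n/k copies of a k-vertex Steiner triple system is such a hypergraph. -/
/-- A hypergraph is linear if any two distinct hyperedges share at most one vertex. -/
def IsLinear {V : Type*} [DecidableEq V] (H : Finset (Finset V)) : Prop :=
  ∀ e₁ ∈ H, ∀ e₂ ∈ H, e₁ ≠ e₂ → (e₁ ∩ e₂).card ≤ 1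

/-- The number of edges of the two-shadow `∂H` of a hypergraph `H`, i.e. the number
of `2`-element vertex sets contained in some hyperedge of `H`. -/
def shadowEdgeCount {V : Type*} [DecidableEq V] (H : Finset (Finset V)) : ℕ :=
  (H.biUnion fun e => e.powersetCard 2).card

/-- A Steiner triple system on a finite vertex type: a `3`-uniform hypergraph in
which every pair of distinct vertices lies in exactly one hyperedge. -/
def IsSteinerTripleSystem {W : Type*} (S : Finset (Finset W)) : Prop :=
  (∀ e ∈ S, e.card = 3) ∧
  ∀ u w : W, u ≠ w → ∃! e, e ∈ S ∧ u ∈ e ∧ w ∈ e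


lemma two_mul_choose_two (k : ℕ) : 2 * Nat.choose k 2 = k * (k - 1) := by
  induction k with
  | zero => rfl
  | succ j ih =>
    rw [Nat.choose_succ_succ, Nat.mul_add, ih, Nat.choose_one_right, Nat.succ_sub_one]
    cases j with
    | zero => rfl
    | succ i => simp [Nat.succ_sub_one]; ring

lemma sts_card {k : ℕ} (S : Finset (Finset (Fin k))) (hS : IsSteinerTripleSystem S) :
    6 * S.card = k * (k - 1) := by
  classical
  have hdisj : ∀ e₁ ∈ S, ∀ e₂ ∈ S, e₁ ≠ e₂ →
      Disjoint (e₁.powersetCard 2) (e₂.powersetCard 2) := by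
    intro e₁ h1 e₂ h2 hne
    rw [Finset.disjoint_left]
    rintro t ht1 ht2
    rw [Finset.mem_powersetCard] at ht1 ht2
    obtain ⟨u, w, huw, rfl⟩ := Finset.card_eq_two.mp ht1.2
    obtain ⟨e, -, hu⟩ := hS.2 u w huw
    have hsub1 := ht1.1; have hsub2 := ht2.1
    simp only [Finset.insert_subset_iff, Finset.singleton_subset_iff] at hsub1 hsub2
    exact hne ((hu e₁ ⟨h1, hsub1.1, hsub1.2⟩).trans (hu e₂ ⟨h2, hsub2.1, hsub2.2⟩).symm)
  have key : (Finset.univ : Finset (Fin k)).powersetCard 2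
      = S.biUnion (fun e => e.powersetCard 2) := by
    ext t
    simp only [Finset.mem_powersetCard, Finset.mem_biUnion]
    constructor
    · rintro ⟨-, ht2⟩
      obtain ⟨u, w, huw, rfl⟩ := Finset.card_eq_two.mp ht2
      obtain ⟨e, ⟨heS, hue, hwe⟩, -⟩ := hS.2 u w huw
      exact ⟨e, heS, by simp [Finset.insert_subset_iff, hue, hwe], ht2⟩
    · rintro ⟨e, heS, hsub, h2⟩
      exact ⟨Finset.subset_univ t, h2⟩
  have h1 : k.choose 2 = ∑ e ∈ S, (e.powersetCard 2).card := by
    rw [← Finset.card_biUnion hdisj, ← key, Finset.card_powersetCard, Finset.card_univ,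
      Fintype.card_fin]
  have h2 : ∑ e ∈ S, (e.powersetCard 2).card = 3 * S.card := by
    rw [Finset.sum_congr rfl (fun e he => by
      rw [Finset.card_powersetCard, hS.1 e he])]
    simp [mul_comm]
  have h3 := two_mul_choose_two k
  calc 6 * S.card = 2 * (3 * S.card) := by ring
    _ = 2 * k.choose 2 := by rw [← h2, ← h1]
    _ = k * (k - 1) := h3

/-- If a Steiner triple system on `k` vertices exists and `n` is a positive multiple
of `k`, then there is an `n`-vertex `3`-uniform linear hypergraph with no Berge path
of length `k` having exactly `(k-1)n/6` hyperedges; indeed one obtained as a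
vertex-disjoint union of `n/k` copies of `k`-vertex Steiner triple systems. -/
theorem sharpness_construction (k n : ℕ) (hn : 0 < n) (hdvd : k ∣ n)
    (hSTS : ∃ S : Finset (Finset (Fin k)), IsSteinerTripleSystem S) :
    ∃ H : Finset (Finset (Fin n)),
      (∀ e ∈ H, e.card = 3) ∧
      IsLinear H ∧
      ¬ HasBergePath H k ∧
      6 * H.card = (k - 1) * n ∧
      ∃ P : Finset (Finset (Fin n)),
        P.card = n / k ∧
        (∀ p ∈ P, p.card = k) ∧
        (∀ p ∈ P, ∀ q ∈ P, p ≠ q → Disjoint p q) ∧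
        (∀ x : Fin n, ∃ p ∈ P, x ∈ p) ∧
        (∀ e ∈ H, ∃ p ∈ P, e ⊆ p) ∧
        (∀ p ∈ P, ∀ u ∈ p, ∀ w ∈ p, u ≠ w →
          ∃! e, e ∈ H ∧ u ∈ e ∧ w ∈ e) := by
  classical
  obtain ⟨S, hS⟩ := hSTS
  obtain ⟨m, rfl⟩ := hdvd
  have hk : 0 < k := Nat.pos_of_ne_zero (by rintro rfl; simp at hn)
  have hm : 0 < m := Nat.pos_of_ne_zero (by rintro rfl; simp at hn)
  set f : Fin m × Fin k ≃ Fin (k * m) := finProdFinEquiv.trans (finCongr (mul_comm m k)) with hf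
  set g : Fin m → Fin k → Fin (k * m) := fun j x => f (j, x) with hgdef
  have hginj : ∀ j, Function.Injective (g j) := by
    intro j x y hxy
    have := f.injective hxy
    exact (Prod.mk.injEq _ _ _ _ ▸ this).2
  set π : Fin (k * m) → Fin m := fun y => (f.symm y).1 with hπdef
  have hπg : ∀ j x, π (g j x) = j := by
    intro j x; simp [hπdef, hgdef]
  set E : Fin m → Finset (Fin k) → Finset (Fin (k * m)) := fun j e => e.image (g j) with hEdef
  set pj : Fin m → Finset (Fin (k * m)) := fun j => Finset.univ.image (g j) with hpjdef
  set H : Finset (Finset (Fin (k * m))) := Finset.univ.biUnion (fun j => S.image (E j)) with hHdef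
  have memH : ∀ t, t ∈ H ↔ ∃ j, ∃ e ∈ S, E j e = t := by
    intro t
    simp [hHdef, Finset.mem_biUnion, Finset.mem_image]
  have hEπ : ∀ j e, ∀ x ∈ E j e, π x = j := by
    intro j e x hx
    obtain ⟨y, -, rfl⟩ := Finset.mem_image.mp hx
    exact hπg j y
  have hEsub : ∀ j e, E j e ⊆ pj j := by
    intro j e x hx
    obtain ⟨y, -, rfl⟩ := Finset.mem_image.mp hx
    exact Finset.mem_image.mpr ⟨y, Finset.mem_univ _, rfl⟩
  have hmempj : ∀ x, x ∈ pj (π x) := by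
    intro x
    refine Finset.mem_image.mpr ⟨(f.symm x).2, Finset.mem_univ _, ?_⟩
    simp [hgdef, hπdef]
  have hpjπ : ∀ j, ∀ x ∈ pj j, π x = j := by
    intro j x hx
    obtain ⟨y, -, rfl⟩ := Finset.mem_image.mp hx
    exact hπg j y
  have hpjcard : ∀ j, (pj j).card = k := by
    intro j
    rw [hpjdef]
    rw [Finset.card_image_of_injective _ (hginj j), Finset.card_univ, Fintype.card_fin]
  -- uniformity
  have huniform : ∀ t ∈ H, t.card = 3 := by
    intro t ht
    obtain ⟨j, e, heS, rfl⟩ := (memH t).mp ht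
    rw [hEdef]
    rw [Finset.card_image_of_injective _ (hginj j)]
    exact hS.1 e heS
  -- STS intersection
  have hSinter : ∀ e₁ ∈ S, ∀ e₂ ∈ S, e₁ ≠ e₂ → (e₁ ∩ e₂).card ≤ 1 := by
    intro e₁ h1 e₂ h2 hne
    rw [Finset.card_le_one]
    intro a ha b hb
    by_contra hab
    rw [Finset.mem_inter] at ha hb
    obtain ⟨e, -, hu⟩ := hS.2 a b hab
    exact hne ((hu e₁ ⟨h1, ha.1, hb.1⟩).trans (hu e₂ ⟨h2, ha.2, hb.2⟩).symm)
  -- linearity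
  have hlin : IsLinear H := by
    intro t₁ ht₁ t₂ ht₂ hne
    obtain ⟨j₁, e₁, he₁, rfl⟩ := (memH t₁).mp ht₁
    obtain ⟨j₂, e₂, he₂, rfl⟩ := (memH t₂).mp ht₂
    by_cases hj : j₁ = j₂
    · subst hj
      have hee : e₁ ≠ e₂ := by rintro rfl; exact hne rfl
      have : E j₁ e₁ ∩ E j₁ e₂ = E j₁ (e₁ ∩ e₂) := by
        rw [hEdef]
        exact (Finset.image_inter e₁ e₂ (hginj j₁)).symm
      rw [this, hEdef, Finset.card_image_of_injective _ (hginj j₁)]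
      exact hSinter e₁ he₁ e₂ he₂ hee
    · have : E j₁ e₁ ∩ E j₂ e₂ = ∅ := by
        rw [Finset.eq_empty_iff_forall_notMem]
        intro x hx
        rw [Finset.mem_inter] at hx
        exact hj ((hEπ j₁ e₁ x hx.1).symm.trans (hEπ j₂ e₂ x hx.2))
      rw [this]; simp
  -- no Berge path
  have noBP : ¬ HasBergePath H k := by
    rintro ⟨v, h, hvinj, hhinj, hcond⟩
    have hstep : ∀ i : Fin k, π (v i.castSucc) = π (v i.succ) := by
      intro i
      obtain ⟨hmem, hv1, hv2⟩ := hcond i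
      obtain ⟨j, e, heS, heq⟩ := (memH (h i)).mp hmem
      rw [hEπ j e _ (heq ▸ hv1), hEπ j e _ (heq ▸ hv2)]
    have hconst : ∀ i : Fin (k + 1), π (v i) = π (v 0) := by
      intro i
      induction i using Fin.induction with
      | zero => rfl
      | succ i ih => rw [← hstep i]; exact ih
    have hsub : Finset.univ.image v ⊆ pj (π (v 0)) := by
      intro x hx
      obtain ⟨i, -, rfl⟩ := Finset.mem_image.mp hx
      have := hmempj (v i)
      rwa [hconst i] at this
    have hle : k + 1 ≤ k := by
      calc k + 1 = (Finset.univ.image v).card := by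
            rw [Finset.card_image_of_injective _ hvinj, Finset.card_univ, Fintype.card_fin]
        _ ≤ (pj (π (v 0))).card := Finset.card_le_card hsub
        _ = k := hpjcard _
    omega
  -- edge count
  have hEnonempty : ∀ j, ∀ e ∈ S, (E j e).Nonempty := by
    intro j e he
    rw [hEdef]
    apply Finset.image_nonempty.mpr
    rw [← Finset.card_pos, hS.1 e he]; omega
  have hfamdisj : ∀ j₁ ∈ (Finset.univ : Finset (Fin m)), ∀ j₂ ∈ Finset.univ, j₁ ≠ j₂ →
      Disjoint (S.image (E j₁)) (S.image (E j₂)) := by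
    intro j₁ _ j₂ _ hne
    rw [Finset.disjoint_left]
    rintro t ht1 ht2
    obtain ⟨e₁, he₁, rfl⟩ := Finset.mem_image.mp ht1
    obtain ⟨e₂, he₂, heq⟩ := Finset.mem_image.mp ht2
    obtain ⟨x, hx⟩ := hEnonempty j₁ e₁ he₁
    exact hne ((hEπ j₁ e₁ x hx).symm.trans (hEπ j₂ e₂ x (heq ▸ hx)))
  have hHcard : H.card = m * S.card := by
    rw [hHdef, Finset.card_biUnion hfamdisj]
    have : ∀ j : Fin m, (S.image (E j)).card = S.card := by
      intro j
      apply Finset.card_image_of_injective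
      intro e₁ e₂ he
      exact Finset.image_injective (hginj j) he
    simp [this, mul_comm]
  have hcount : 6 * H.card = (k - 1) * (k * m) := by
    rw [hHcard]
    have := sts_card S hS
    calc 6 * (m * S.card) = m * (6 * S.card) := by ring
      _ = m * (k * (k - 1)) := by rw [this]
      _ = (k - 1) * (k * m) := by ring
  -- partition
  set P : Finset (Finset (Fin (k * m))) := Finset.univ.image pj with hPdef
  have hpjinj : Function.Injective pj := by
    intro j₁ j₂ he
    have hx : g j₁ ⟨0, hk⟩ ∈ pj j₁ := Finset.mem_image.mpr ⟨_, Finset.mem_univ _, rfl⟩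
    have := hpjπ j₂ _ (he ▸ hx)
    rw [hπg] at this
    exact this
  refine ⟨H, huniform, hlin, noBP, hcount, P, ?_, ?_, ?_, ?_, ?_, ?_⟩
  · rw [hPdef, Finset.card_image_of_injective _ hpjinj, Finset.card_univ, Fintype.card_fin,
      Nat.mul_div_cancel_left m hk]
  · intro p hp
    obtain ⟨j, -, rfl⟩ := Finset.mem_image.mp hp
    exact hpjcard j
  · intro p hp q hq hne
    obtain ⟨j₁, -, rfl⟩ := Finset.mem_image.mp hp
    obtain ⟨j₂, -, rfl⟩ := Finset.mem_image.mp hq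
    have hj : j₁ ≠ j₂ := fun h => hne (h ▸ rfl)
    rw [Finset.disjoint_left]
    intro x hx1 hx2
    exact hj ((hpjπ j₁ x hx1).symm.trans (hpjπ j₂ x hx2))
  · intro x
    exact ⟨pj (π x), Finset.mem_image.mpr ⟨_, Finset.mem_univ _, rfl⟩, hmempj x⟩
  · intro t ht
    obtain ⟨j, e, heS, rfl⟩ := (memH t).mp ht
    exact ⟨pj j, Finset.mem_image.mpr ⟨_, Finset.mem_univ _, rfl⟩, hEsub j e⟩
  · intro p hp u hu w hw huw
    obtain ⟨j, -, rfl⟩ := Finset.mem_image.mp hp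
    obtain ⟨a, -, rfl⟩ := Finset.mem_image.mp hu
    obtain ⟨b, -, rfl⟩ := Finset.mem_image.mp hw
    have hab : a ≠ b := fun h => huw (h ▸ rfl)
    obtain ⟨e, ⟨heS, hae, hbe⟩, huniq⟩ := hS.2 a b hab
    refine ⟨E j e, ⟨(memH _).mpr ⟨j, e, heS, rfl⟩,
      Finset.mem_image.mpr ⟨a, hae, rfl⟩, Finset.mem_image.mpr ⟨b, hbe, rfl⟩⟩, ?_⟩
    rintro t ⟨htH, hut, hwt⟩
    obtain ⟨j', e', he'S, rfl⟩ := (memH t).mp htH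
    have hj : j' = j := (hEπ j' e' _ hut).symm.trans (hπg j a)
    subst hj
    obtain ⟨a', ha'e', ha'⟩ := Finset.mem_image.mp hut
    obtain ⟨b', hb'e', hb'⟩ := Finset.mem_image.mp hwt
    have ha2 : a' = a := hginj j' ha'
    have hb2 : b' = b := hginj j' hb'
    subst ha2; subst hb2
    rw [huniq e' ⟨he'S, ha'e', hb'e'⟩]
end

section
/- Let H be an n-vertex {2,3}-uniform linear hypergraph containing no Berge path of length 2. Then e(∂H) = n if and only if n is a multiple of 3 and H consists of n/3 pairwise disjoint hyperedges of size three covering all vertices. -/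
/-!
Two distinct hyperedges through a common vertex `x`, one of them not contained in the other,
already carry a Berge path of length `2` through `x`. Hence the hyperedges are pairwise
disjoint, so `e(∂H) = ∑ (|e| choose 2)` while `∑ |e| ≤ n`. Since `(k choose 2) ≤ k` for
`k ∈ {2, 3}`, with equality only at `k = 3`, the shadow has `n` edges exactly when every
hyperedge is a triangle and the triangles partition the vertex set.
-/

section

open Finset

variable {V : Type*}

lemma hasBergePath_two_of_mem {H : Finset (Finset V)} {e₁ e₂ : Finset V}
    (he₁ : e₁ ∈ H) (he₂ : e₂ ∈ H) (hne : e₁ ≠ e₂) {y x z : V}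
    (hy : y ∈ e₁) (hx₁ : x ∈ e₁) (hx₂ : x ∈ e₂) (hz : z ∈ e₂)
    (hyx : y ≠ x) (hzx : z ≠ x) (hyz : y ≠ z) : HasBergePath H 2 := by
  refine ⟨![y, x, z], ![e₁, e₂], ?_, ?_, ?_⟩
  · intro i j hij
    fin_cases i <;> fin_cases j <;> simp_all [eq_comm]
  · intro i j hij
    fin_cases i <;> fin_cases j <;> simp_all [eq_comm]
  · intro i
    fin_cases i
    exacts [⟨he₁, hy, hx₁⟩, ⟨he₂, hx₂, hz⟩]

lemma sum_card_eq_three_mul {H : Finset (Finset V)} (h3 : ∀ e ∈ H, #e = 3) :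
    ∑ e ∈ H, #e = 3 * #H := by
  rw [sum_congr rfl h3, sum_const, smul_eq_mul, mul_comm]

lemma sum_choose_two_eq_three_mul {H : Finset (Finset V)} (h3 : ∀ e ∈ H, #e = 3) :
    ∑ e ∈ H, (#e).choose 2 = 3 * #H := by
  rw [sum_congr rfl fun e he => by rw [h3 e he], sum_const, smul_eq_mul, mul_comm]
  rfl

variable [DecidableEq V]

lemma subset_of_not_hasBergePath_two {H : Finset (Finset V)} (hforb : ¬ HasBergePath H 2)
    {e₁ e₂ : Finset V} (he₁ : e₁ ∈ H) (he₂ : e₂ ∈ H) (hne : e₁ ≠ e₂) (hcard : 2 ≤ #e₂)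
    {x : V} (hx₁ : x ∈ e₁) (hx₂ : x ∈ e₂) : e₁ ⊆ e₂ := by
  intro y hy
  by_contra hy₂
  obtain ⟨z, hz, hzx⟩ := exists_mem_ne hcard x
  exact hforb <| hasBergePath_two_of_mem he₁ he₂ hne hy hx₁ hx₂ hz
    (by rintro rfl; exact hy₂ hx₂) hzx (by rintro rfl; exact hy₂ hz)

lemma pairwiseDisjoint_of_not_hasBergePath_two {H : Finset (Finset V)}
    (hcard : ∀ e ∈ H, 2 ≤ #e) (hforb : ¬ HasBergePath H 2) :
    (H : Set (Finset V)).PairwiseDisjoint id := by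
  intro e₁ he₁ e₂ he₂ hne
  rw [Function.onFun, id, id, Finset.disjoint_left]
  intro x hx₁ hx₂
  exact hne <| subset_antisymm
    (subset_of_not_hasBergePath_two hforb he₁ he₂ hne (hcard e₂ he₂) hx₁ hx₂)
    (subset_of_not_hasBergePath_two hforb he₂ he₁ hne.symm (hcard e₁ he₁) hx₂ hx₁)

lemma shadowEdgeCount_eq_sum_choose_two {H : Finset (Finset V)}
    (hdisj : (H : Set (Finset V)).PairwiseDisjoint id) :
    shadowEdgeCount H = ∑ e ∈ H, (#e).choose 2 := by
  rw [shadowEdgeCount, card_biUnion]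
  · exact sum_congr rfl fun e _ => card_powersetCard 2 e
  · intro e₁ he₁ e₂ he₂ hne
    rw [Function.onFun, Finset.disjoint_left]
    intro p hp₁ hp₂
    rw [mem_powersetCard] at hp₁ hp₂
    obtain ⟨w, hw⟩ : p.Nonempty := card_pos.1 (by omega)
    exact Finset.disjoint_left.1 (hdisj he₁ he₂ hne) (hp₁.1 hw) (hp₂.1 hw)

lemma sum_card_le_card_univ [Fintype V] {H : Finset (Finset V)}
    (hdisj : (H : Set (Finset V)).PairwiseDisjoint id) :
    ∑ e ∈ H, #e ≤ Fintype.card V := by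
  calc ∑ e ∈ H, #e = #(H.biUnion id) := (card_biUnion hdisj).symm
    _ ≤ Fintype.card V := card_le_univ _

lemma forall_card_eq_three_of_sum_choose_two_eq [Fintype V] {H : Finset (Finset V)}
    (hunif : ∀ e ∈ H, #e = 2 ∨ #e = 3) (hdisj : (H : Set (Finset V)).PairwiseDisjoint id)
    (hsum : ∑ e ∈ H, (#e).choose 2 = Fintype.card V) : ∀ e ∈ H, #e = 3 := by
  have hle : ∀ e ∈ H, (#e).choose 2 ≤ #e := fun e he => by
    rcases hunif e he with h | h <;> rw [h] <;> decide
  have hsum_eq : ∑ e ∈ H, (#e).choose 2 = ∑ e ∈ H, #e :=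
    le_antisymm (sum_le_sum hle) (hsum ▸ sum_card_le_card_univ hdisj)
  intro e he
  have hchoose : (#e).choose 2 = #e := (sum_eq_sum_iff_of_le hle).1 hsum_eq e he
  rcases hunif e he with h | h
  · exact absurd (h ▸ hchoose) (by decide)
  · exact h

lemma exists_mem_of_sum_card_eq [Fintype V] {H : Finset (Finset V)}
    (hdisj : (H : Set (Finset V)).PairwiseDisjoint id)
    (hsum : ∑ e ∈ H, #e = Fintype.card V) (x : V) : ∃ e ∈ H, x ∈ e := by
  have hcover : H.biUnion id = univ := eq_univ_of_card _ ((card_biUnion hdisj).trans hsum)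
  have hx : x ∈ H.biUnion id := hcover ▸ mem_univ x
  simpa using hx

end

theorem shadow_no_path_two_equality_general {V : Type*} [Fintype V] [DecidableEq V]
    (H : Finset (Finset V))
    (hunif : ∀ e ∈ H, e.card = 2 ∨ e.card = 3)
    (hforb : ¬ HasBergePath H 2) :
    shadowEdgeCount H = Fintype.card V ↔
      3 ∣ Fintype.card V ∧
      H.card = Fintype.card V / 3 ∧
      (∀ e ∈ H, e.card = 3) ∧
      (∀ e₁ ∈ H, ∀ e₂ ∈ H, e₁ ≠ e₂ → Disjoint e₁ e₂) ∧
      (∀ x : V, ∃ e ∈ H, x ∈ e) := by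
  have hdisj : (H : Set (Finset V)).PairwiseDisjoint id :=
    pairwiseDisjoint_of_not_hasBergePath_two (fun e he => by have := hunif e he; omega) hforb
  rw [shadowEdgeCount_eq_sum_choose_two hdisj]
  constructor
  · intro hsum
    have h3 := forall_card_eq_three_of_sum_choose_two_eq hunif hdisj hsum
    have hn : Fintype.card V = 3 * H.card := hsum ▸ sum_choose_two_eq_three_mul h3
    have hcover : ∑ e ∈ H, e.card = Fintype.card V := hn ▸ sum_card_eq_three_mul h3
    exact ⟨⟨H.card, hn⟩, by omega, h3, fun e₁ he₁ e₂ he₂ => hdisj he₁ he₂,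
      exists_mem_of_sum_card_eq hdisj hcover⟩
  · rintro ⟨hdvd, hcard, h3, -, -⟩
    rw [sum_choose_two_eq_three_mul h3, hcard, Nat.mul_div_cancel' hdvd]

/-- For an `n`-vertex `{2,3}`-uniform linear hypergraph with no Berge path of length
`2`, the two-shadow has exactly `n` edges iff `3 ∣ n` and `H` consists of `n/3`
pairwise disjoint hyperedges of size three covering all vertices. -/
theorem shadow_no_path_two_equality {V : Type*} [Fintype V] [DecidableEq V]
    (H : Finset (Finset V))
    (hunif : ∀ e ∈ H, e.card = 2 ∨ e.card = 3)
    (hlin : IsLinear H)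
    (hforb : ¬ HasBergePath H 2) :
    shadowEdgeCount H = Fintype.card V ↔
      3 ∣ Fintype.card V ∧
      H.card = Fintype.card V / 3 ∧
      (∀ e ∈ H, e.card = 3) ∧
      (∀ e₁ ∈ H, ∀ e₂ ∈ H, e₁ ≠ e₂ → Disjoint e₁ e₂) ∧
      (∀ x : V, ∃ e ∈ H, x ∈ e) :=
  shadow_no_path_two_equality_general H hunif hforb
end

section
/- Let H be an n-vertex {2,3}-uniform linear hypergraph containing no Berge path of length 3. Then the two-shadow ∂H has at most 3(n-1)/2 edges. -/
/-!
Linearity and the absence of a Berge path of length three force every edge either to meet the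
other edges in at most one vertex, or to be a `2`-edge of a triangle `ab, bc, ca` that no further
edge touches. Splitting off such a piece, which spans `m ≤ 3` vertices and so contributes at most
`m(m-1)/2 ≤ 3(m-1)/2` shadow edges, removes at least `m - 1` vertices from the support, and
induction on the number of edges gives `2 e(∂H) ≤ 3 (|V(H)| - 1)`.
-/

open Finset

section

variable {V : Type*}

lemma HasBergePath.mono {H H' : Finset (Finset V)} (hsub : H' ⊆ H) {k : ℕ} :
    HasBergePath H' k → HasBergePath H k := by
  rintro ⟨v, h, hv, hh, hp⟩
  exact ⟨v, h, hv, hh, fun i => ⟨hsub (hp i).1, (hp i).2⟩⟩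

lemma hasBergePath_three_of_mem {H : Finset (Finset V)} {a x y b : V} {e f g : Finset V}
    (he : e ∈ H) (hf : f ∈ H) (hg : g ∈ H)
    (hax : a ≠ x) (hay : a ≠ y) (hab : a ≠ b) (hxy : x ≠ y) (hxb : x ≠ b) (hyb : y ≠ b)
    (hef : e ≠ f) (heg : e ≠ g) (hfg : f ≠ g)
    (hae : a ∈ e) (hxe : x ∈ e) (hxf : x ∈ f) (hyf : y ∈ f) (hyg : y ∈ g) (hbg : b ∈ g) :
    HasBergePath H 3 := by
  refine ⟨![a, x, y, b], ![e, f, g], ?_, ?_, ?_⟩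
  · intro i j hij
    fin_cases i <;> fin_cases j <;> simp_all
  · intro i j hij
    fin_cases i <;> fin_cases j <;> simp_all
  · intro i
    fin_cases i <;> simp [*]

variable [DecidableEq V]

def vertexSupport (H : Finset (Finset V)) : Finset V := H.biUnion id

def IsPeel (H T : Finset (Finset V)) : Prop :=
  T ⊆ H ∧ T.Nonempty ∧ #(vertexSupport T) ≤ 3 ∧ #(vertexSupport T ∩ vertexSupport (H \ T)) ≤ 1

lemma vertexSupport_union (H H' : Finset (Finset V)) :
    vertexSupport (H ∪ H') = vertexSupport H ∪ vertexSupport H' :=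
  union_biUnion

lemma shadowEdgeCount_union_le (H H' : Finset (Finset V)) :
    shadowEdgeCount (H ∪ H') ≤ shadowEdgeCount H + shadowEdgeCount H' := by
  unfold shadowEdgeCount
  rw [union_biUnion]
  exact card_union_le _ _

lemma shadowEdgeCount_le_choose (H : Finset (Finset V)) :
    shadowEdgeCount H ≤ (#(vertexSupport H)).choose 2 := by
  rw [← card_powersetCard]
  refine card_le_card fun s hs => ?_
  obtain ⟨e, he, hs⟩ := mem_biUnion.1 hs
  obtain ⟨hse, hcard⟩ := mem_powersetCard.1 hs
  exact mem_powersetCard.2 ⟨hse.trans (subset_biUnion_of_mem id he), hcard⟩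

lemma two_mul_shadowEdgeCount_le_of_card_vertexSupport_le_three {T : Finset (Finset V)}
    (hT : #(vertexSupport T) ≤ 3) :
    2 * shadowEdgeCount T ≤ 3 * (#(vertexSupport T) - 1) := by
  refine (Nat.mul_le_mul_left 2 (shadowEdgeCount_le_choose T)).trans ?_
  interval_cases #(vertexSupport T) <;> decide

theorem two_mul_shadowEdgeCount_le_of_forall_isPeel (H : Finset (Finset V))
    (hpeel : ∀ H' ⊆ H, H'.Nonempty → ∃ T, IsPeel H' T) :
    2 * shadowEdgeCount H ≤ 3 * (#(vertexSupport H) - 1) := by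
  induction H using Finset.strongInduction with
  | H H ih =>
  rcases H.eq_empty_or_nonempty with rfl | hne
  · simp [shadowEdgeCount]
  obtain ⟨T, hTH, hTne, hT3, hTrest⟩ := hpeel H subset_rfl hne
  have hrest := ih (H \ T) (sdiff_ssubset hTH hTne)
    fun H' hH' => hpeel H' (hH'.trans sdiff_subset)
  have hT := two_mul_shadowEdgeCount_le_of_card_vertexSupport_le_three hT3
  have hshadow := shadowEdgeCount_union_le T (H \ T)
  have hsupp := card_union_add_card_inter (vertexSupport T) (vertexSupport (H \ T))
  rw [← vertexSupport_union] at hsupp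
  rw [union_sdiff_of_subset hTH] at hshadow hsupp
  have hleft : #(vertexSupport T ∩ vertexSupport (H \ T)) ≤ #(vertexSupport T) :=
    card_le_card inter_subset_left
  have hright : #(vertexSupport T ∩ vertexSupport (H \ T)) ≤ #(vertexSupport (H \ T)) :=
    card_le_card inter_subset_right
  omega

lemma vertexSupport_triangle (a b c : V) :
    vertexSupport ({{a, b}, {b, c}, {c, a}} : Finset (Finset V)) = {a, b, c} := by
  ext x
  simp only [vertexSupport, mem_biUnion, mem_insert, mem_singleton, id_eq]
  aesop

lemma eq_pair_of_forall_ne {s : Finset V} {a b : V} (ha : a ∈ s) (hb : b ∈ s)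
    (hs : ∀ z ∈ s, z ≠ a → z = b) : s = {a, b} := by
  refine Subset.antisymm (fun z hz => ?_) (by simp [insert_subset_iff, ha, hb])
  simpa [or_iff_not_imp_left] using hs z hz

variable {H : Finset (Finset V)}

lemma IsLinear.mono {H' : Finset (Finset V)} (hsub : H' ⊆ H) (hlin : IsLinear H) :
    IsLinear H' :=
  fun e he f hf hef => hlin e (hsub he) f (hsub hf) hef

lemma IsLinear.eq_of_mem_of_mem (hlin : IsLinear H) {e f : Finset V} (he : e ∈ H) (hf : f ∈ H)
    {x y : V} (hxy : x ≠ y) (hxe : x ∈ e) (hxf : x ∈ f) (hye : y ∈ e) (hyf : y ∈ f) : e = f := by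
  by_contra hef
  have hinter := hlin e he f hf hef
  have hpair := card_le_card (s := {x, y}) (t := e ∩ f) (by simp [insert_subset_iff, *])
  rw [card_pair hxy] at hpair
  omega

/-- Any other edge `h ∋ a` would start a Berge path `u, h, a, ab, b, bc, c`. -/
lemma eq_or_eq_of_mem_of_triangle (hlin : IsLinear H) (hforb : ¬ HasBergePath H 3)
    {a b c : V} (hab : a ≠ b) (hbc : b ≠ c) (hca : c ≠ a)
    (hab_mem : {a, b} ∈ H) (hbc_mem : {b, c} ∈ H) (hca_mem : {c, a} ∈ H)
    {h : Finset V} (hh : h ∈ H) (hh2 : 2 ≤ #h) (hah : a ∈ h) :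
    h = {a, b} ∨ h = {c, a} := by
  by_contra! hne
  obtain ⟨u, huh, hua⟩ := exists_mem_ne hh2 a
  have hub : u ≠ b := by
    rintro rfl
    exact hne.1 (hlin.eq_of_mem_of_mem hh hab_mem hab hah (by simp) huh (by simp))
  have huc : u ≠ c := by
    rintro rfl
    exact hne.2 (hlin.eq_of_mem_of_mem hh hca_mem hca.symm hah (by simp) huh (by simp))
  have ha_bc : a ∉ ({b, c} : Finset V) := by simp [hab, hca.symm]
  refine hforb (hasBergePath_three_of_mem hh hab_mem hbc_mem hua hub huc hab hca.symm hbc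
    hne.1 ?_ ?_ huh hah (by simp) (by simp) (by simp) (by simp))
  · rintro rfl; exact ha_bc hah
  · intro heq; exact ha_bc (heq ▸ by simp)

/-- Any `a ∈ e - x` and `b ∈ g - y` must coincide, as otherwise `a, e, x, f, y, g, b` is a Berge
path. -/
lemma exists_triangle_of_mem_of_mem (hlin : IsLinear H) (hforb : ¬ HasBergePath H 3)
    {e f g : Finset V} (he : e ∈ H) (hf : f ∈ H) (hg : g ∈ H)
    (he2 : 2 ≤ #e) (hg2 : 2 ≤ #g) (hef : e ≠ f) (heg : e ≠ g) (hfg : f ≠ g)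
    {x y : V} (hxy : x ≠ y) (hxe : x ∈ e) (hxf : x ∈ f) (hyf : y ∈ f) (hyg : y ∈ g) :
    ∃ v, v ≠ x ∧ v ≠ y ∧ e = {x, v} ∧ f = {x, y} ∧ g = {y, v} := by
  have hye : y ∉ e := fun hye => hef (hlin.eq_of_mem_of_mem he hf hxy hxe hxf hye hyf)
  have hxg : x ∉ g := fun hxg => hfg (hlin.eq_of_mem_of_mem hf hg hxy hxf hxg hyf hyg)
  have hends : ∀ a ∈ e, a ≠ x → ∀ b ∈ g, b ≠ y → a = b := by
    intro a hae hax b hbg hby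
    by_contra hab
    exact hforb (hasBergePath_three_of_mem he hf hg hax (ne_of_mem_of_not_mem hae hye) hab hxy
      (ne_of_mem_of_not_mem hbg hxg).symm (Ne.symm hby) hef heg hfg hae hxe hxf hyf hyg hbg)
  obtain ⟨v, hve, hvx⟩ := exists_mem_ne he2 x
  obtain ⟨b, hbg, hby⟩ := exists_mem_ne hg2 y
  have hvg : v ∈ g := hends v hve hvx b hbg hby ▸ hbg
  have hvy : v ≠ y := ne_of_mem_of_not_mem hve hye
  refine ⟨v, hvx, hvy, eq_pair_of_forall_ne hxe hve fun z hz hzx => hends z hz hzx v hvg hvy,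
    eq_pair_of_forall_ne hxf hyf fun z hz hzx => ?_,
    eq_pair_of_forall_ne hyg hvg fun z hz hzy => (hends v hve hvx z hz hzy).symm⟩
  by_contra hzy
  have hzv : z ≠ v := by
    rintro rfl
    exact hef (hlin.eq_of_mem_of_mem he hf hzx.symm hxe hxf hve hz)
  exact hforb (hasBergePath_three_of_mem hg he hf hvy.symm hxy.symm (Ne.symm hzy) hvx hzv.symm
    (Ne.symm hzx) heg.symm hfg.symm hef hyg hvg hve hxe hxf hz)

lemma mem_triangle_of_mem (hlin : IsLinear H) (hforb : ¬ HasBergePath H 3)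
    {a b c : V} (hab : a ≠ b) (hbc : b ≠ c) (hca : c ≠ a)
    (hab_mem : {a, b} ∈ H) (hbc_mem : {b, c} ∈ H) (hca_mem : {c, a} ∈ H)
    {h : Finset V} (hh : h ∈ H) (hh2 : 2 ≤ #h) {x : V} (hxh : x ∈ h)
    (hx : x ∈ ({a, b, c} : Finset V)) :
    h ∈ ({{a, b}, {b, c}, {c, a}} : Finset (Finset V)) := by
  simp only [mem_insert, mem_singleton] at hx ⊢
  rcases hx with rfl | rfl | rfl
  · have := eq_or_eq_of_mem_of_triangle hlin hforb hab hbc hca hab_mem hbc_mem hca_mem hh hh2 hxh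
    tauto
  · have := eq_or_eq_of_mem_of_triangle hlin hforb hbc hca hab hbc_mem hca_mem hab_mem hh hh2 hxh
    tauto
  · have := eq_or_eq_of_mem_of_triangle hlin hforb hca hab hbc hca_mem hab_mem hbc_mem hh hh2 hxh
    tauto

lemma isPeel_singleton {e : Finset V} (he : e ∈ H) (he3 : #e ≤ 3)
    (hshared : #(e ∩ vertexSupport (H.erase e)) ≤ 1) : IsPeel H {e} := by
  refine ⟨singleton_subset_iff.2 he, singleton_nonempty e, ?_, ?_⟩
  · simpa [vertexSupport] using he3
  · simpa [vertexSupport, sdiff_singleton_eq_erase] using hshared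

lemma isPeel_triangle (hlin : IsLinear H) (hforb : ¬ HasBergePath H 3) (h2 : ∀ e ∈ H, 2 ≤ #e)
    {a b c : V} (hab : a ≠ b) (hbc : b ≠ c) (hca : c ≠ a)
    (hab_mem : {a, b} ∈ H) (hbc_mem : {b, c} ∈ H) (hca_mem : {c, a} ∈ H) :
    IsPeel H {{a, b}, {b, c}, {c, a}} := by
  refine ⟨by simp [insert_subset_iff, *], insert_nonempty _ _, ?_, ?_⟩
  · rw [vertexSupport_triangle]
    exact card_le_three
  · suffices hdisj : vertexSupport {{a, b}, {b, c}, {c, a}} ∩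
        vertexSupport (H \ {{a, b}, {b, c}, {c, a}}) = ∅ by simp [hdisj]
    refine eq_empty_of_forall_notMem fun x hx => ?_
    rw [vertexSupport_triangle] at hx
    obtain ⟨hxT, hx⟩ := mem_inter.1 hx
    obtain ⟨h, hh, hxh⟩ := mem_biUnion.1 hx
    obtain ⟨hh, hhT⟩ := mem_sdiff.1 hh
    exact hhT (mem_triangle_of_mem hlin hforb hab hbc hca hab_mem hbc_mem hca_mem hh (h2 h hh)
      hxh hxT)

lemma exists_isPeel (hunif : ∀ e ∈ H, #e = 2 ∨ #e = 3) (hlin : IsLinear H)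
    (hforb : ¬ HasBergePath H 3) (hne : H.Nonempty) : ∃ T, IsPeel H T := by
  have h2 : ∀ e ∈ H, 2 ≤ #e := fun e he => by rcases hunif e he with h | h <;> omega
  obtain ⟨e, he⟩ := hne
  by_cases hshared : #(e ∩ vertexSupport (H.erase e)) ≤ 1
  · exact ⟨{e}, isPeel_singleton he (by rcases hunif e he with h | h <;> omega) hshared⟩
  obtain ⟨u, hu, w, hw, huw⟩ := one_lt_card.1 (not_le.1 hshared)
  obtain ⟨hue, g, ⟨hge, hg⟩, hug⟩ : u ∈ e ∧ ∃ g, (g ≠ e ∧ g ∈ H) ∧ u ∈ g := by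
    simpa [vertexSupport] using hu
  obtain ⟨hwe, f, ⟨hfe, hf⟩, hwf⟩ : w ∈ e ∧ ∃ f, (f ≠ e ∧ f ∈ H) ∧ w ∈ f := by
    simpa [vertexSupport] using hw
  have hgf : g ≠ f := fun hgf => hge (hlin.eq_of_mem_of_mem hg he huw hug hue (hgf ▸ hwf) hwe)
  obtain ⟨v, hvu, hvw, rfl, rfl, rfl⟩ := exists_triangle_of_mem_of_mem hlin hforb hg he hf
    (h2 _ hg) (h2 _ hf) hge hgf (Ne.symm hfe) huw hug hue hwe hwf
  rw [pair_comm] at hg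
  exact ⟨_, isPeel_triangle hlin hforb h2 huw hvw.symm hvu he hf hg⟩

end

/-- An `n`-vertex `{2,3}`-uniform linear hypergraph with no Berge path of length `3`
has at most `3(n-1)/2` edges in its two-shadow. -/
theorem shadow_no_path_three {V : Type*} [Fintype V] [DecidableEq V]
    (H : Finset (Finset V))
    (hunif : ∀ e ∈ H, e.card = 2 ∨ e.card = 3)
    (hlin : IsLinear H)
    (hforb : ¬ HasBergePath H 3) :
    2 * shadowEdgeCount H ≤ 3 * (Fintype.card V - 1) := by
  refine (two_mul_shadowEdgeCount_le_of_forall_isPeel H fun H' hH' hne => ?_).trans ?_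
  · exact exists_isPeel (fun e he => hunif e (hH' he)) (hlin.mono hH')
      (fun hpath => hforb (hpath.mono hH')) hne
  · gcongr
    exact card_le_univ _
end

section
/- Let H be a connected n-vertex {2,3}-uniform linear hypergraph containing no Berge cycle (of any length). Then the two-shadow ∂H has at most 3(n-1)/2 edges. -/
/-- A Berge cycle of length `ℓ ≥ 2` in a hypergraph `H`: `ℓ` distinct vertices
`v 0, …, v (ℓ-1)` and `ℓ` distinct hyperedges `h 0, …, h (ℓ-1)` of `H` with
`{v i, v (i+1)} ⊆ h i` for all `i`, indices modulo `ℓ`. -/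
def HasBergeCycle {V : Type*} (H : Finset (Finset V)) (ℓ : ℕ) : Prop :=
  ∃ (hℓ : 2 ≤ ℓ) (v : Fin ℓ → V) (h : Fin ℓ → Finset V),
    Function.Injective v ∧ Function.Injective h ∧
    ∀ i : Fin ℓ, h i ∈ H ∧ v i ∈ h i ∧
      v ⟨(i.val + 1) % ℓ, Nat.mod_lt _ (by omega)⟩ ∈ h i

/-- The two-shadow of a hypergraph `H`, as a simple graph: `a` and `b` are adjacent
iff they are distinct and lie in a common hyperedge of `H`. -/
def shadowGraph {V : Type*} (H : Finset (Finset V)) : SimpleGraph V where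
  Adj a b := a ≠ b ∧ ∃ e ∈ H, a ∈ e ∧ b ∈ e
  symm := ⟨fun a b hab => ⟨hab.1.symm, hab.2.imp fun e he => ⟨he.1, he.2.2, he.2.1⟩⟩⟩
  loopless := ⟨fun a ha => ha.1 rfl⟩

/-!
A hypergraph has no Berge cycle exactly when its vertex–hyperedge incidence graph is a forest.
A forest on `|V| + |H|` vertices has fewer edges than vertices, and the incidence graph has
`∑ |e|` edges, so `∑ (|e| - 1) ≤ |V| - 1`. A hyperedge of size `2` or `3` contributes
`C(|e|, 2) ≤ 3 (|e| - 1) / 2` pairs to the shadow.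
-/

open Finset SimpleGraph

lemma SimpleGraph.IsAcyclic.card_edgeFinset_le {W : Type*} [Fintype W] {G : SimpleGraph W}
    [Fintype G.edgeSet] (hG : G.IsAcyclic) : #G.edgeFinset ≤ Fintype.card W - 1 := by
  classical
  cases isEmpty_or_nonempty W
  · rw [Fintype.card_eq_zero, Nat.le_zero, card_eq_zero, edgeFinset_eq_empty]
    ext x
    exact isEmptyElim x
  obtain ⟨T, hGT, -, hT⟩ := connected_top.exists_isTree_le_of_le_of_isAcyclic le_top hG
  have := hT.card_edgeFinset
  have := card_le_card ((edgeFinset_subset_edgeFinset (G₁ := G) (G₂ := T)).mpr hGT)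
  omega

section Incidence

variable {V : Type*}

def incidenceGraph (H : Finset (Finset V)) : SimpleGraph (V ⊕ H) where
  Adj
    | .inl a, .inr e => a ∈ (e : Finset V)
    | .inr e, .inl a => a ∈ (e : Finset V)
    | .inl _, .inl _ | .inr _, .inr _ => False
  symm := ⟨fun x y => by cases x <;> cases y <;> exact id⟩
  loopless := ⟨fun x => by cases x <;> exact id⟩

namespace incidenceGraph

variable {H : Finset (Finset V)}

@[simp]
lemma adj_inl_inr {a : V} {e : H} : (incidenceGraph H).Adj (.inl a) (.inr e) ↔
    a ∈ (e : Finset V) :=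
  Iff.rfl

@[simp]
lemma adj_inr_inl {a : V} {e : H} : (incidenceGraph H).Adj (.inr e) (.inl a) ↔
    a ∈ (e : Finset V) :=
  Iff.rfl

lemma isLeft_eq_not_isLeft_of_adj {x y : V ⊕ H} (h : (incidenceGraph H).Adj x y) :
    x.isLeft = !y.isLeft := by
  cases x <;> cases y <;> first | rfl | exact h.elim

lemma isLeft_getVert_iff {a : V} {w : V ⊕ H} (p : (incidenceGraph H).Walk (.inl a) w) {k : ℕ}
    (hk : k ≤ p.length) : (p.getVert k).isLeft ↔ Even k := by
  induction k with
  | zero => simp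
  | succ k ih =>
    rw [Nat.even_add_one, ← ih (by omega),
      isLeft_eq_not_isLeft_of_adj (p.adj_getVert_succ (i := k) (by omega))]
    simp

lemma exists_hasBergeCycle_of_isCycle {a : V} {p : (incidenceGraph H).Walk (.inl a) (.inl a)}
    (hp : p.IsCycle) : ∃ ℓ, HasBergeCycle H ℓ := by
  -- The cycle alternates between vertices at even and hyperedges at odd positions; its vertex
  -- `2 i` and hyperedge `2 i + 1` are the `i`-th vertex and hyperedge of the Berge cycle.
  obtain ⟨ℓ, hℓ⟩ : Even p.length := by
    rw [← isLeft_getVert_iff p le_rfl, p.getVert_length]; rfl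
  have h3 := hp.three_le_length
  have hinj {i j : ℕ} (hi : i < p.length) (hj : j < p.length) (h : p.getVert i = p.getVert j) :
      i = j :=
    hp.getVert_injOn' (by simp only [Set.mem_ofPred_eq]; omega)
      (by simp only [Set.mem_ofPred_eq]; omega) h
  have hv (i : Fin ℓ) : ∃ b, p.getVert (2 * i) = .inl b :=
    Sum.isLeft_iff.mp ((isLeft_getVert_iff p (by omega)).mpr (even_two_mul _))
  have he (i : Fin ℓ) : ∃ e, p.getVert (2 * i + 1) = .inr e := by
    refine Sum.isRight_iff.mp ?_
    rw [← Sum.not_isLeft, isLeft_getVert_iff p (by omega)]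
    simp
  choose v hv using hv
  choose e he using he
  refine ⟨ℓ, by omega, v, fun i => e i, fun i j hij => ?_, fun i j hij => ?_,
    fun i => ⟨(e i).2, ?_, ?_⟩⟩
  · have := hinj (i := 2 * i) (j := 2 * j) (by omega) (by omega) (by rw [hv, hv, hij])
    omega
  · have := hinj (i := 2 * i + 1) (j := 2 * j + 1) (by omega) (by omega)
      (by rw [he, he, Subtype.ext hij])
    omega
  · have := p.adj_getVert_succ (i := 2 * i) (by omega)
    rwa [hv, he] at this
  · set j : Fin ℓ := ⟨(i + 1) % ℓ, Nat.mod_lt _ (by omega)⟩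
    have hnext : p.getVert (2 * i + 1 + 1) = p.getVert (2 * j) := by
      change _ = p.getVert (2 * ((i + 1) % ℓ))
      rcases Nat.lt_or_ge (i + 1) ℓ with h | h
      · rw [Nat.mod_eq_of_lt h]; ring_nf
      · rw [show (i.val + 1) % ℓ = 0 by rw [show i.val + 1 = ℓ by omega, Nat.mod_self],
          show 2 * i.val + 1 + 1 = p.length by omega, p.getVert_length, mul_zero, p.getVert_zero]
    have := p.adj_getVert_succ (i := 2 * i + 1) (by omega)
    rwa [he, hnext, hv] at this

lemma isAcyclic (hH : ∀ ℓ, ¬HasBergeCycle H ℓ) : (incidenceGraph H).IsAcyclic := by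
  classical
  intro x p hp
  cases x with
  | inl a => exact hH _ (exists_hasBergeCycle_of_isCycle hp).choose_spec
  | inr e =>
    obtain ⟨a, ha⟩ : ∃ a, p.getVert 1 = .inl a := by
      have := p.adj_getVert_succ (i := 0) (by have := hp.three_le_length; omega)
      rw [p.getVert_zero] at this
      cases h : p.getVert 1 with
      | inl a => exact ⟨a, rfl⟩
      | inr _ => rw [h] at this; exact this.elim
    have hmem : Sum.inl a ∈ p.support := ha ▸ p.getVert_mem_support 1
    exact hH _ (exists_hasBergeCycle_of_isCycle (hp.rotate hmem)).choose_spec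

lemma sum_card_le_card_edgeFinset [Fintype (incidenceGraph H).edgeSet] :
    ∑ e ∈ H, #e ≤ #(incidenceGraph H).edgeFinset := by
  rw [← sum_attach H, ← card_sigma]
  refine card_le_card_of_injOn (fun x => s(.inl x.2, .inr x.1)) (fun x hx => ?_) ?_
  · simpa using (mem_sigma.mp hx).2
  · rintro ⟨e, a⟩ - ⟨e', a'⟩ - h
    obtain ⟨rfl, rfl⟩ : a = a' ∧ e = e' := by simpa using h
    rfl

end incidenceGraph

lemma sum_card_sub_one_le_of_forall_not_hasBergeCycle [Fintype V] {H : Finset (Finset V)}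
    (hne : ∀ e ∈ H, e.Nonempty) (hH : ∀ ℓ, ¬HasBergeCycle H ℓ) :
    ∑ e ∈ H, (#e - 1) ≤ Fintype.card V - 1 := by
  classical
  have hsum : ∑ e ∈ H, (#e - 1) + #H = ∑ e ∈ H, #e := by
    rw [card_eq_sum_ones, ← sum_add_distrib]
    exact sum_congr rfl fun e he => Nat.sub_add_cancel (hne e he).card_pos
  have := (incidenceGraph.isAcyclic hH).card_edgeFinset_le
  have := incidenceGraph.sum_card_le_card_edgeFinset (H := H)
  simp only [Fintype.card_sum, Fintype.card_coe] at *
  omega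

lemma shadowEdgeCount_le_sum_choose [DecidableEq V] (H : Finset (Finset V)) :
    shadowEdgeCount H ≤ ∑ e ∈ H, (#e).choose 2 := by
  rw [shadowEdgeCount]
  simpa only [card_powersetCard] using card_biUnion_le (s := H) (t := (powersetCard 2 ·))

end Incidence

theorem shadow_bound_of_berge_cycle_free_general {V : Type*} [Fintype V] [DecidableEq V]
    (H : Finset (Finset V))
    (hunif : ∀ e ∈ H, e.card = 2 ∨ e.card = 3)
    (hforb : ∀ ℓ : ℕ, ¬ HasBergeCycle H ℓ) :
    2 * shadowEdgeCount H ≤ 3 * (Fintype.card V - 1) := by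
  have hne : ∀ e ∈ H, e.Nonempty := fun e he =>
    card_pos.mp (by rcases hunif e he with h | h <;> omega)
  calc 2 * shadowEdgeCount H ≤ ∑ e ∈ H, 2 * (#e).choose 2 := by
        rw [← mul_sum]; exact Nat.mul_le_mul_left 2 (shadowEdgeCount_le_sum_choose H)
    _ ≤ ∑ e ∈ H, 3 * (#e - 1) :=
        sum_le_sum fun e he => by rcases hunif e he with h | h <;> rw [h] <;> decide
    _ = 3 * ∑ e ∈ H, (#e - 1) := (mul_sum ..).symm
    _ ≤ 3 * (Fintype.card V - 1) :=
        Nat.mul_le_mul_left 3 (sum_card_sub_one_le_of_forall_not_hasBergeCycle hne hforb)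

/-- A connected `n`-vertex `{2,3}`-uniform linear hypergraph with no Berge cycle of
any length has at most `3(n-1)/2` edges in its two-shadow. -/
theorem shadow_bound_of_berge_cycle_free {V : Type*} [Fintype V] [DecidableEq V]
    (H : Finset (Finset V))
    (hunif : ∀ e ∈ H, e.card = 2 ∨ e.card = 3)
    (hlin : IsLinear H)
    (hconn : (shadowGraph H).Connected)
    (hforb : ∀ ℓ : ℕ, ¬ HasBergeCycle H ℓ) :
    2 * shadowEdgeCount H ≤ 3 * (Fintype.card V - 1) :=
  shadow_bound_of_berge_cycle_free_general H hunif hforb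
end

section
/- Let H be a connected hypergraph on n vertices that contains a Berge cycle of length k. If n > k, then H contains a Berge path of length k. -/
/-!
Since `n > k`, some vertex lies off the cycle, and connectivity of the two-shadow gives a
hyperedge `e` containing a cycle vertex `v j` and a vertex `y` off the cycle. If `e` is not a
cycle edge, walk `y, e, v j` and then once around the cycle, omitting the cycle edge that
returns to `v j`. If `e = h i` is a cycle edge, do the same starting from `v (i + 1)`: the
omitted cycle edge is then `h i` itself, so it is free to serve as the first edge.
-/

section

variable {V : Type*} {m : ℕ}

def IsBergePath (H : Finset (Finset V)) (v : Fin (m + 1) → V) (h : Fin m → Finset V) : Prop :=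
  Function.Injective v ∧ Function.Injective h ∧
    ∀ i : Fin m, h i ∈ H ∧ v i.castSucc ∈ h i ∧ v i.succ ∈ h i

def IsBergeCycle (H : Finset (Finset V)) (v : Fin (m + 1) → V)
    (h : Fin (m + 1) → Finset V) : Prop :=
  Function.Injective v ∧ Function.Injective h ∧ ∀ i, h i ∈ H ∧ v i ∈ h i ∧ v (i + 1) ∈ h i

variable {H : Finset (Finset V)}

lemma IsBergePath.hasBergePath {v : Fin (m + 1) → V} {h : Fin m → Finset V}
    (hp : IsBergePath H v h) : HasBergePath H m :=
  ⟨v, h, hp⟩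

lemma HasBergeCycle.exists_isBergeCycle (hc : HasBergeCycle H (m + 1)) :
    ∃ (v : Fin (m + 1) → V) (h : Fin (m + 1) → Finset V), IsBergeCycle H v h := by
  obtain ⟨_, v, h, hv, hh, hvh⟩ := hc
  have succ_eq (i : Fin (m + 1)) :
      (⟨(i.val + 1) % (m + 1), Nat.mod_lt _ m.succ_pos⟩ : Fin (m + 1)) = i + 1 := by
    ext; simp [Fin.val_add]
  exact ⟨v, h, hv, hh, fun i => by simpa only [succ_eq] using hvh i⟩

lemma IsBergePath.cons {v : Fin (m + 1) → V} {h : Fin m → Finset V}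
    (hp : IsBergePath H v h) {y : V} {e : Finset V} (hy : y ∉ Set.range v) (he : e ∈ H)
    (he_fresh : e ∉ Set.range h) (hye : y ∈ e) (hve : v 0 ∈ e) :
    IsBergePath H (Fin.cons y v) (Fin.cons e h) := by
  obtain ⟨hv, hh, hvh⟩ := hp
  refine ⟨Fin.cons_injective_iff.2 ⟨hy, hv⟩, Fin.cons_injective_iff.2 ⟨he_fresh, hh⟩, ?_⟩
  intro i
  cases i using Fin.cases with
  | zero => exact ⟨he, hye, hve⟩
  | succ i => simpa [← Fin.succ_castSucc] using hvh i

/-- Deleting the hyperedge `h (j - 1)` of a Berge cycle leaves a Berge path starting at `v j`. -/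
lemma IsBergeCycle.isBergePath_rotate {v : Fin (m + 1) → V} {h : Fin (m + 1) → Finset V}
    (hc : IsBergeCycle H v h) (j : Fin (m + 1)) :
    IsBergePath H (fun t => v (j + t)) (fun t => h (j + t.castSucc)) := by
  obtain ⟨hv, hh, hvh⟩ := hc
  refine ⟨hv.comp (add_right_injective j),
    hh.comp ((add_right_injective j).comp (Fin.castSucc_injective m)), fun t => ?_⟩
  simpa [add_assoc, Fin.coeSucc_eq_succ] using hvh (j + t.castSucc)

lemma IsBergeCycle.hasBergePath {v : Fin (m + 1) → V} {h : Fin (m + 1) → Finset V}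
    (hc : IsBergeCycle H v h) {j : Fin (m + 1)} {y : V} {e : Finset V}
    (hy : y ∉ Set.range v) (he : e ∈ H) (hye : y ∈ e) (hve : v j ∈ e)
    (he_fresh : ∀ i, h i = e → i + 1 = j) :
    HasBergePath H (m + 1) := by
  refine ((hc.isBergePath_rotate j).cons ?_ he ?_ hye (by simpa using hve)).hasBergePath
  · rintro ⟨t, rfl⟩
    exact hy ⟨_, rfl⟩
  · rintro ⟨t, ht⟩
    have : j + t.succ = j := by
      rw [← Fin.coeSucc_eq_succ, ← add_assoc, he_fresh _ ht]
    exact Fin.succ_ne_zero t (add_eq_left.1 this)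

lemma SimpleGraph.Preconnected.exists_adj_of_mem_of_notMem {G : SimpleGraph V}
    (hG : G.Preconnected) {S : Set V} {a b : V} (ha : a ∈ S) (hb : b ∉ S) :
    ∃ x ∈ S, ∃ y ∉ S, G.Adj x y := by
  obtain ⟨d, -, hd⟩ := (hG a b).some.exists_boundary_dart S ha hb
  exact ⟨_, hd.1, _, hd.2, d.adj⟩

end

theorem berge_path_of_berge_cycle_general {V : Type*} [Fintype V]
    (H : Finset (Finset V)) (k : ℕ)
    (hconn : (shadowGraph H).Connected)
    (hcyc : HasBergeCycle H k)
    (hn : k < Fintype.card V) :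
    HasBergePath H k := by
  obtain ⟨m, rfl⟩ : ∃ m, k = m + 1 := ⟨k - 1, by obtain ⟨hk, -⟩ := hcyc; omega⟩
  obtain ⟨v, h, hc⟩ := hcyc.exists_isBergeCycle
  obtain ⟨u, hu⟩ : ∃ u, u ∉ Set.range v := by
    by_contra! hsurj
    have := Fintype.card_le_of_surjective v hsurj
    rw [Fintype.card_fin] at this
    omega
  obtain ⟨_, ⟨j, rfl⟩, y, hy, -, e, he, hje, hye⟩ :=
    hconn.preconnected.exists_adj_of_mem_of_notMem (Set.mem_range_self 0) hu
  by_cases he_cyc : ∃ i, h i = e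
  · obtain ⟨i, rfl⟩ := he_cyc
    exact hc.hasBergePath hy he hye (hc.2.2 i).2.2 fun i' hi' => by rw [hc.2.1 hi']
  · exact hc.hasBergePath hy he hye hje fun i hi => (he_cyc ⟨i, hi⟩).elim

/-- In a connected hypergraph on `n` vertices containing a Berge cycle of length `k`
with `n > k`, there is a Berge path of length `k`. -/
theorem berge_path_of_berge_cycle {V : Type*} [Fintype V] [DecidableEq V]
    (H : Finset (Finset V)) (k : ℕ)
    (hconn : (shadowGraph H).Connected)
    (hcyc : HasBergeCycle H k)
    (hn : k < Fintype.card V) :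
    HasBergePath H k :=
  berge_path_of_berge_cycle_general H k hconn hcyc hn
end

section
/- Let H be a {2,3}-uniform linear hypergraph and let C = v_1, h_1, v_2, h_2, ..., v_ℓ, h_ℓ be a Berge cycle of maximum length ℓ in H (H contains no longer Berge cycle). Let u be a vertex of H not among v_1, ..., v_ℓ. Then (S(u) ∪ L(u)) ∩ S(u)^- = ∅. -/
/-- The cyclic successor of an index `i : Fin ℓ`. -/
def cnext {ℓ : ℕ} (hℓ : 0 < ℓ) (i : Fin ℓ) : Fin ℓ :=
  ⟨(i.val + 1) % ℓ, Nat.mod_lt _ hℓ⟩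

/-- For a Berge cycle with defining vertices `v` and defining hyperedges `h`, and a
vertex `u` outside the cycle: `S(u)` is the set of defining vertices joined to `u` by
some hyperedge of `H` that is not a defining hyperedge of the cycle. -/
def Sset {V : Type*} {ℓ : ℕ} (H : Finset (Finset V))
    (v : Fin ℓ → V) (h : Fin ℓ → Finset V) (u : V) : Set V :=
  {w | (∃ i : Fin ℓ, w = v i) ∧ ∃ e ∈ H, (∀ j : Fin ℓ, e ≠ h j) ∧ u ∈ e ∧ w ∈ e}

/-- `L(u) = {v i : h i = {v i, v (i+1), u}}`. -/
def Lset {V : Type*} [DecidableEq V] {ℓ : ℕ} (hℓ : 0 < ℓ)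
    (v : Fin ℓ → V) (h : Fin ℓ → Finset V) (u : V) : Set V :=
  {w | ∃ i : Fin ℓ, w = v i ∧ h i = {v i, v (cnext hℓ i), u}}

/-- The left shift `A⁻ = {v (i-1) : v i ∈ A} = {v i : v (i+1) ∈ A}` of a set of
defining vertices of the cycle, indices modulo `ℓ`. -/
def shiftMinus {V : Type*} {ℓ : ℕ} (hℓ : 0 < ℓ)
    (v : Fin ℓ → V) (A : Set V) : Set V :=
  {w | ∃ i : Fin ℓ, w = v i ∧ v (cnext hℓ i) ∈ A}

private lemma mod_cancel' {ℓ a b c : ℕ} (ha : a < ℓ) (hb : b < ℓ)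
    (hmod : (a + c) % ℓ = (b + c) % ℓ) : a = b := by
  have h1 : a ≡ b [MOD ℓ] := Nat.ModEq.add_right_cancel' c hmod
  rwa [Nat.ModEq, Nat.mod_eq_of_lt ha, Nat.mod_eq_of_lt hb] at h1

private lemma mod_ne_i {ℓ j : ℕ} (i : Fin ℓ) (hj : j < ℓ - 1)
    (hcon : (j + i.val + 1) % ℓ = i.val) : False := by
  have hℓ : 0 < ℓ := i.pos
  have h4 : (j + 1 + i.val) % ℓ = (0 + i.val) % ℓ := by
    rw [show j + 1 + i.val = j + i.val + 1 from by ring, hcon, Nat.zero_add,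
      Nat.mod_eq_of_lt i.isLt]
  have := mod_cancel' (a := j + 1) (b := 0) (by omega) hℓ h4
  omega

private lemma key_cycle {V : Type*} [DecidableEq V] (H : Finset (Finset V))
    {ℓ : ℕ} (hℓ2 : 2 ≤ ℓ) (hℓ : 0 < ℓ)
    (v : Fin ℓ → V) (h : Fin ℓ → Finset V)
    (hv : Function.Injective v) (hh : Function.Injective h)
    (hC : ∀ i : Fin ℓ, h i ∈ H ∧ v i ∈ h i ∧ v (cnext hℓ i) ∈ h i)
    (u : V) (hu : ∀ i : Fin ℓ, u ≠ v i)
    (i : Fin ℓ) (f e : Finset V)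
    (hfH : f ∈ H) (heH : e ∈ H)
    (huf : u ∈ f) (hvf : v i ∈ f) (hue : u ∈ e) (hve : v (cnext hℓ i) ∈ e)
    (hef : e ≠ f) (hfne : ∀ j : Fin ℓ, j ≠ i → f ≠ h j)
    (hene : ∀ j : Fin ℓ, e ≠ h j) : HasBergeCycle H (ℓ + 1) := by
  refine ⟨by omega,
    (fun j => if hj : j.val < ℓ then v ⟨(j.val + i.val + 1) % ℓ, Nat.mod_lt _ hℓ⟩ else u),
    (fun j => if hj : j.val < ℓ - 1 then h ⟨(j.val + i.val + 1) % ℓ, Nat.mod_lt _ hℓ⟩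
      else if j.val = ℓ - 1 then f else e), ?_, ?_, ?_⟩
  · -- injectivity of vertices
    intro j₁ j₂ heq
    dsimp only at heq
    have b₁ := j₁.isLt; have b₂ := j₂.isLt
    by_cases h1 : j₁.val < ℓ <;> by_cases h2 : j₂.val < ℓ
    · rw [dif_pos h1, dif_pos h2] at heq
      have heq' : ((j₁.val + i.val + 1) % ℓ) = ((j₂.val + i.val + 1) % ℓ) :=
        congrArg Fin.val (hv heq)
      refine Fin.ext (mod_cancel' h1 h2 (c := i.val + 1) ?_)
      rw [← Nat.add_assoc, ← Nat.add_assoc]; exact heq'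
    · rw [dif_pos h1, dif_neg h2] at heq
      exact absurd heq.symm (hu _)
    · rw [dif_neg h1, dif_pos h2] at heq
      exact absurd heq (hu _)
    · exact Fin.ext (by omega)
  · -- injectivity of edges
    intro j₁ j₂ heq
    dsimp only at heq
    have b₁ := j₁.isLt; have b₂ := j₂.isLt
    by_cases h1 : j₁.val < ℓ - 1 <;> by_cases h2 : j₂.val < ℓ - 1
    · rw [dif_pos h1, dif_pos h2] at heq
      have heq' : (j₁.val + (i.val + 1)) % ℓ = (j₂.val + (i.val + 1)) % ℓ := by
        rw [← Nat.add_assoc, ← Nat.add_assoc]; exact congrArg Fin.val (hh heq)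
      exact Fin.ext (mod_cancel' (by omega) (by omega) heq')
    · rw [dif_pos h1, dif_neg h2] at heq
      by_cases h3 : j₂.val = ℓ - 1
      · rw [if_pos h3] at heq
        exact absurd heq.symm (hfne _ (fun hcon => mod_ne_i i h1 (congrArg Fin.val hcon)))
      · rw [if_neg h3] at heq
        exact absurd heq.symm (hene _)
    · rw [dif_neg h1, dif_pos h2] at heq
      by_cases h3 : j₁.val = ℓ - 1
      · rw [if_pos h3] at heq
        exact absurd heq (hfne _ (fun hcon => mod_ne_i i h2 (congrArg Fin.val hcon)))
      · rw [if_neg h3] at heq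
        exact absurd heq (hene _)
    · rw [dif_neg h1, dif_neg h2] at heq
      by_cases h3 : j₁.val = ℓ - 1 <;> by_cases h4 : j₂.val = ℓ - 1
      · exact Fin.ext (by omega)
      · rw [if_pos h3, if_neg h4] at heq
        exact absurd heq.symm hef
      · rw [if_neg h3, if_pos h4] at heq
        exact absurd heq hef
      · exact Fin.ext (by omega)
  · -- edge conditions
    intro j
    dsimp only
    have bj := j.isLt
    by_cases h1 : j.val < ℓ - 1
    · simp only [dif_pos h1]
      have hjlt : j.val < ℓ := by omega
      have succlt : (j.val + 1) % (ℓ + 1) = j.val + 1 := Nat.mod_eq_of_lt (by omega)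
      have hC' := hC ⟨(j.val + i.val + 1) % ℓ, Nat.mod_lt _ hℓ⟩
      refine ⟨hC'.1, ?_, ?_⟩
      · rw [dif_pos hjlt]
        exact hC'.2.1
      · have h2 : ((j.val + 1) % (ℓ + 1)) < ℓ := by omega
        rw [dif_pos h2]
        have heq : ((j.val + 1) % (ℓ + 1) + i.val + 1) % ℓ =
            ((j.val + i.val + 1) % ℓ + 1) % ℓ := by
          rw [Nat.mod_add_mod, succlt]
          congr 1
          ring
        have goal := hC'.2.2
        unfold cnext at goal
        convert goal using 2
        exact Fin.ext heq
    · by_cases h2 : j.val = ℓ - 1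
      · simp only [dif_neg h1, if_pos h2]
        refine ⟨hfH, ?_, ?_⟩
        · have hjlt : j.val < ℓ := by omega
          rw [dif_pos hjlt]
          have hmod : (j.val + i.val + 1) % ℓ = i.val := by
            rw [show j.val + i.val + 1 = ℓ + i.val from by omega, Nat.add_mod_left,
              Nat.mod_eq_of_lt i.isLt]
          convert hvf using 2
          exact Fin.ext hmod
        · have hge : ¬ ((j.val + 1) % (ℓ + 1) < ℓ) := by
            rw [show j.val + 1 = ℓ from by omega, Nat.mod_eq_of_lt (by omega)]; omega
          rw [dif_neg hge]
          exact huf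
      · have h3 : j.val = ℓ := by omega
        simp only [dif_neg h1, if_neg h2]
        refine ⟨heH, ?_, ?_⟩
        · have hge : ¬ (j.val < ℓ) := by omega
          rw [dif_neg hge]
          exact hue
        · have hmod : (j.val + 1) % (ℓ + 1) = 0 := by rw [h3, Nat.mod_self]
          have hlt : (j.val + 1) % (ℓ + 1) < ℓ := by omega
          rw [dif_pos hlt]
          have hmod2 : ((j.val + 1) % (ℓ + 1) + i.val + 1) % ℓ = (i.val + 1) % ℓ := by
            rw [hmod, Nat.zero_add]
          convert hve using 2
          exact Fin.ext hmod2

/-- Claim 3: if `C` is a longest Berge cycle in a `{2,3}`-uniform linear hypergraph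
`H` and `u` is a vertex outside `C`, then `(S(u) ∪ L(u)) ∩ S(u)⁻ = ∅`. -/
theorem claim_shift_disjoint {V : Type*} [Fintype V] [DecidableEq V]
    (H : Finset (Finset V))
    (hunif : ∀ e ∈ H, e.card = 2 ∨ e.card = 3)
    (hlin : IsLinear H)
    (ℓ : ℕ) (hℓ2 : 2 ≤ ℓ) (hℓ : 0 < ℓ)
    (v : Fin ℓ → V) (h : Fin ℓ → Finset V)
    (hv : Function.Injective v) (hh : Function.Injective h)
    (hC : ∀ i : Fin ℓ, h i ∈ H ∧ v i ∈ h i ∧ v (cnext hℓ i) ∈ h i)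
    (hmax : ∀ ℓ' : ℕ, ℓ < ℓ' → ¬ HasBergeCycle H ℓ')
    (u : V) (hu : ∀ i : Fin ℓ, u ≠ v i) :
    (Sset H v h u ∪ Lset hℓ v h u) ∩ shiftMinus hℓ v (Sset H v h u) = ∅ := by
  ext x
  simp only [Set.mem_inter_iff, Set.mem_union, Set.mem_empty_iff_false, iff_false, not_and]
  rintro hx hx2
  obtain ⟨i, hxvi, hnext⟩ := hx2
  obtain ⟨-, e, heH, hene, hue, hve⟩ := hnext
  subst hxvi
  have build : ∃ f ∈ H, u ∈ f ∧ v i ∈ f ∧ e ≠ f ∧ ∀ j, j ≠ i → f ≠ h j := by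
    rcases hx with hS | hL
    · obtain ⟨-, f, hfH, hfne, huf, hvf⟩ := hS
      refine ⟨f, hfH, huf, hvf, ?_, fun j _ => hfne j⟩
      rintro rfl
      have hsub : ({v i, v (cnext hℓ i)} : Finset V) ⊆ e ∩ h i := by
        intro x hx
        simp only [Finset.mem_insert, Finset.mem_singleton] at hx
        rcases hx with rfl | rfl
        · exact Finset.mem_inter.mpr ⟨hvf, (hC i).2.1⟩
        · exact Finset.mem_inter.mpr ⟨hve, (hC i).2.2⟩
      have hne : v i ≠ v (cnext hℓ i) := by
        intro hcon
        have : i = cnext hℓ i := hv hcon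
        have : i.val = (i.val + 1) % ℓ := congrArg Fin.val this
        have hi := i.isLt
        rcases Nat.lt_or_ge (i.val + 1) ℓ with h' | h'
        · rw [Nat.mod_eq_of_lt h'] at this; omega
        · have : (i.val + 1) % ℓ = 0 := by
            rw [show i.val + 1 = ℓ from by omega, Nat.mod_self]
          omega
      have hcard : 2 ≤ (e ∩ h i).card := by
        calc 2 = ({v i, v (cnext hℓ i)} : Finset V).card := (Finset.card_pair hne).symm
        _ ≤ (e ∩ h i).card := Finset.card_le_card hsub
      have := hlin e heH (h i) (hC i).1 (hene i)
      omega
    · obtain ⟨i'', hi'', hhi⟩ := hL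
      have hii : i'' = i := hv hi''.symm
      subst hii
      refine ⟨h i'', (hC i'').1, ?_, (hC i'').2.1, hene i'', fun j hj hcon => hj (hh hcon.symm)⟩
      rw [hhi]
      simp
  obtain ⟨f, hfH, huf, hvf, hef, hfne⟩ := build
  exact hmax (ℓ + 1) (by omega)
    (key_cycle H hℓ2 hℓ v h hv hh hC u hu i f e hfH heH huf hvf hue hve hef hfne hene)
end

section
/- Let H be a {2,3}-uniform linear hypergraph and let C = v_1, h_1, v_2, h_2, ..., v_ℓ, h_ℓ be a Berge cycle of maximum length ℓ in H (H contains no longer Berge cycle). Let u be a vertex of H not among v_1, ..., v_ℓ. Then no two cyclically consecutive defining vertices v_i, v_{i+1} both belong to S(u); consequently 2·|S(u)| <= ℓ. -/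
/-- Vertices of the extended cycle: `u` inserted after position `i`. -/
def cycV {V : Type*} {ℓ : ℕ} (hℓ : 0 < ℓ) (v : Fin ℓ → V) (i : Fin ℓ) (u : V) :
    Fin (ℓ + 1) → V :=
  fun j => if j.val ≤ i.val then v ⟨j.val % ℓ, Nat.mod_lt _ hℓ⟩
    else if j.val = i.val + 1 then u
    else v ⟨(j.val - 1) % ℓ, Nat.mod_lt _ hℓ⟩

/-- Hyperedges of the extended cycle: `h i` replaced by `e, f`. -/
def cycH {V : Type*} {ℓ : ℕ} (hℓ : 0 < ℓ) (h : Fin ℓ → Finset V) (i : Fin ℓ)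
    (e f : Finset V) : Fin (ℓ + 1) → Finset V :=
  fun j => if j.val < i.val then h ⟨j.val % ℓ, Nat.mod_lt _ hℓ⟩
    else if j.val = i.val then e
    else if j.val = i.val + 1 then f
    else h ⟨(j.val - 1) % ℓ, Nat.mod_lt _ hℓ⟩

/-- If `C` is a longest Berge cycle in a `{2,3}`-uniform linear hypergraph `H` and
`u` is a vertex outside `C`, then no two cyclically consecutive defining vertices
both lie in `S(u)`; consequently `2·|S(u)| ≤ ℓ`. -/
theorem claim_no_consecutive_in_S {V : Type*} [Fintype V] [DecidableEq V]
    (H : Finset (Finset V))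
    (hunif : ∀ e ∈ H, e.card = 2 ∨ e.card = 3)
    (hlin : IsLinear H)
    (ℓ : ℕ) (hℓ2 : 2 ≤ ℓ) (hℓ : 0 < ℓ)
    (v : Fin ℓ → V) (h : Fin ℓ → Finset V)
    (hv : Function.Injective v) (hh : Function.Injective h)
    (hC : ∀ i : Fin ℓ, h i ∈ H ∧ v i ∈ h i ∧ v (cnext hℓ i) ∈ h i)
    (hmax : ∀ ℓ' : ℕ, ℓ < ℓ' → ¬ HasBergeCycle H ℓ')
    (u : V) (hu : ∀ i : Fin ℓ, u ≠ v i) :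
    (∀ i : Fin ℓ, ¬ (v i ∈ Sset H v h u ∧ v (cnext hℓ i) ∈ Sset H v h u)) ∧
    2 * (Sset H v h u).ncard ≤ ℓ := by
  classical
  have hvinj' : ∀ a b : ℕ, a < ℓ → b < ℓ →
      v ⟨a % ℓ, Nat.mod_lt _ hℓ⟩ = v ⟨b % ℓ, Nat.mod_lt _ hℓ⟩ → a = b := by
    intro a b ha hb hab
    have := congrArg Fin.val (hv hab)
    simp only at this
    rwa [Nat.mod_eq_of_lt ha, Nat.mod_eq_of_lt hb] at this
  have hhinj' : ∀ a b : ℕ, a < ℓ → b < ℓ →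
      h ⟨a % ℓ, Nat.mod_lt _ hℓ⟩ = h ⟨b % ℓ, Nat.mod_lt _ hℓ⟩ → a = b := by
    intro a b ha hb hab
    have := congrArg Fin.val (hh hab)
    simp only at this
    rwa [Nat.mod_eq_of_lt ha, Nat.mod_eq_of_lt hb] at this
  have hCnext : ∀ (k k' : Fin ℓ), k'.val = (k.val + 1) % ℓ → v k' ∈ h k := by
    intro k k' hk'
    have := (hC k).2.2
    rwa [show cnext hℓ k = k' from Fin.ext hk'.symm] at this
  have key : ∀ i : Fin ℓ, ¬ (v i ∈ Sset H v h u ∧ v (cnext hℓ i) ∈ Sset H v h u) := by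
    intro i hcon
    obtain ⟨hs1, hs2⟩ := hcon
    simp only [Sset, Set.mem_setOf_eq] at hs1 hs2
    obtain ⟨-, e, heH, hene, hue, hvie⟩ := hs1
    obtain ⟨-, f, hfH, hfne, huf, hvf⟩ := hs2
    have hii : i.val < ℓ := i.isLt
    have hne_idx : cnext hℓ i ≠ i := by
      intro hc
      have hcv : (i.val + 1) % ℓ = i.val := congrArg Fin.val hc
      rcases Nat.lt_or_ge (i.val + 1) ℓ with hlt | hge
      · rw [Nat.mod_eq_of_lt hlt] at hcv; omega
      · have h1 : i.val + 1 = ℓ := by omega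
        rw [h1, Nat.mod_self] at hcv; omega
    have hvne : v i ≠ v (cnext hℓ i) := fun hc => hne_idx (hv hc.symm)
    by_cases hef : e = f
    · subst hef
      have hsub : ({v i, v (cnext hℓ i)} : Finset V) ⊆ e ∩ h i := by
        intro x hx
        simp only [Finset.mem_insert, Finset.mem_singleton] at hx
        rcases hx with rfl | rfl
        · exact Finset.mem_inter.mpr ⟨hvie, (hC i).2.1⟩
        · exact Finset.mem_inter.mpr ⟨hvf, (hC i).2.2⟩
      have h2 : 2 ≤ (e ∩ h i).card := by
        have hc := Finset.card_le_card hsub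
        rw [Finset.card_insert_of_notMem (by simpa using hvne),
          Finset.card_singleton] at hc
        omega
      have := hlin e heH (h i) (hC i).1 (hene i)
      omega
    · -- extend the cycle: insert u between v i and v (i+1)
      have hV1 : ∀ (j : Fin (ℓ + 1)) (k : Fin ℓ), j.val ≤ i.val → k.val = j.val →
          cycV hℓ v i u j = v k := by
        intro j k h1 hk
        simp only [cycV]
        rw [if_pos h1]
        exact congrArg v (Fin.ext (by simp only; rw [Nat.mod_eq_of_lt (by omega)]; omega))
      have hVu : ∀ (j : Fin (ℓ + 1)), j.val = i.val + 1 → cycV hℓ v i u j = u := by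
        intro j h1
        simp only [cycV]
        rw [if_neg (by omega), if_pos h1]
      have hV2 : ∀ (j : Fin (ℓ + 1)) (k : Fin ℓ), i.val + 1 < j.val → k.val = j.val - 1 →
          cycV hℓ v i u j = v k := by
        intro j k h1 hk
        simp only [cycV]
        rw [if_neg (by omega), if_neg (by omega)]
        exact congrArg v (Fin.ext (by simp only; rw [Nat.mod_eq_of_lt (by omega)]; omega))
      have hH1 : ∀ (j : Fin (ℓ + 1)) (k : Fin ℓ), j.val < i.val → k.val = j.val →
          cycH hℓ h i e f j = h k := by
        intro j k h1 hk
        simp only [cycH]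
        rw [if_pos h1]
        exact congrArg h (Fin.ext (by simp only; rw [Nat.mod_eq_of_lt (by omega)]; omega))
      have hHe : ∀ (j : Fin (ℓ + 1)), j.val = i.val → cycH hℓ h i e f j = e := by
        intro j h1
        simp only [cycH]
        rw [if_neg (by omega), if_pos h1]
      have hHf : ∀ (j : Fin (ℓ + 1)), j.val = i.val + 1 → cycH hℓ h i e f j = f := by
        intro j h1
        simp only [cycH]
        rw [if_neg (by omega), if_neg (by omega), if_pos h1]
      have hH2 : ∀ (j : Fin (ℓ + 1)) (k : Fin ℓ), i.val + 1 < j.val → k.val = j.val - 1 →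
          cycH hℓ h i e f j = h k := by
        intro j k h1 hk
        simp only [cycH]
        rw [if_neg (by omega), if_neg (by omega), if_neg (by omega)]
        exact congrArg h (Fin.ext (by simp only; rw [Nat.mod_eq_of_lt (by omega)]; omega))
      refine hmax (ℓ + 1) (by omega) ⟨by omega, cycV hℓ v i u, cycH hℓ h i e f, ?_, ?_, ?_⟩
      · -- injectivity of vertices
        intro a b hab
        have ha := a.isLt; have hb := b.isLt
        apply Fin.ext
        simp only [cycV] at hab
        split_ifs at hab with h1 h2 h3 h4 h5 h6 h7 h8 <;>
          first
          | omega
          | exact absurd hab (hu _)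
          | exact absurd hab.symm (hu _)
          | (have := hvinj' _ _ (by omega) (by omega) hab; omega)
      · -- injectivity of edges
        intro a b hab
        have ha := a.isLt; have hb := b.isLt
        apply Fin.ext
        simp only [cycH] at hab
        split_ifs at hab with h1 h2 h3 h4 h5 h6 h7 h8 h9 h10 h11 h12 <;>
          first
          | omega
          | exact absurd hab (hene _)
          | exact absurd hab.symm (hene _)
          | exact absurd hab (hfne _)
          | exact absurd hab.symm (hfne _)
          | exact absurd hab hef
          | exact absurd hab.symm hef
          | (have := hhinj' _ _ (by omega) (by omega) hab; omega)
      · -- cycle conditions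
        intro j
        have hj : j.val < ℓ + 1 := j.isLt
        rcases show j.val < i.val ∨ j.val = i.val ∨ j.val = i.val + 1 ∨ i.val + 1 < j.val
          by omega with hc | hc | hc | hc
        · refine ⟨?_, ?_, ?_⟩
          · rw [hH1 j ⟨j.val, by omega⟩ hc rfl]; exact (hC _).1
          · rw [hH1 j ⟨j.val, by omega⟩ hc rfl, hV1 j ⟨j.val, by omega⟩ (by omega) rfl]
            exact (hC _).2.1
          · rw [hH1 j ⟨j.val, by omega⟩ hc rfl,
              hV1 _ ⟨j.val + 1, by omega⟩ (by simp only; rw [Nat.mod_eq_of_lt (by omega)]; omega)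
                (by simp only; rw [Nat.mod_eq_of_lt (by omega)])]
            exact hCnext ⟨j.val, by omega⟩ ⟨j.val + 1, by omega⟩
              (by simp only; rw [Nat.mod_eq_of_lt (by omega)])
        · refine ⟨?_, ?_, ?_⟩
          · rw [hHe j hc]; exact heH
          · rw [hHe j hc, hV1 j i (by omega) (by omega)]; exact hvie
          · rw [hHe j hc, hVu _ (by simp only; rw [Nat.mod_eq_of_lt (by omega)]; omega)]
            exact hue
        · refine ⟨?_, ?_, ?_⟩
          · rw [hHf j hc]; exact hfH
          · rw [hHf j hc, hVu j hc]; exact huf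
          · rw [hHf j hc]
            rcases Nat.lt_or_ge (i.val + 1) ℓ with hlt | hge
            · rw [hV2 _ (cnext hℓ i)
                (by simp only; rw [Nat.mod_eq_of_lt (by omega)]; omega)
                (by simp only [cnext]; rw [Nat.mod_eq_of_lt (by omega), Nat.mod_eq_of_lt (by omega)]; omega)]
              exact hvf
            · have hieq : i.val + 1 = ℓ := by omega
              rw [hV1 _ (cnext hℓ i)
                (by simp only; rw [show j.val + 1 = ℓ + 1 by omega, Nat.mod_self]; omega)
                (by simp only [cnext]; rw [show i.val + 1 = ℓ from hieq, Nat.mod_self,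
                  show j.val + 1 = ℓ + 1 by omega, Nat.mod_self])]
              exact hvf
        · have hk : (⟨j.val - 1, by omega⟩ : Fin ℓ).val = j.val - 1 := rfl
          refine ⟨?_, ?_, ?_⟩
          · rw [hH2 j ⟨j.val - 1, by omega⟩ hc rfl]; exact (hC _).1
          · rw [hH2 j ⟨j.val - 1, by omega⟩ hc rfl, hV2 j ⟨j.val - 1, by omega⟩ hc rfl]
            exact (hC _).2.1
          · rw [hH2 j ⟨j.val - 1, by omega⟩ hc rfl]
            rcases Nat.lt_or_ge j.val ℓ with hlt | hge
            · rw [hV2 _ ⟨j.val, by omega⟩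
                (by simp only; rw [Nat.mod_eq_of_lt (by omega)]; omega)
                (by simp only; rw [Nat.mod_eq_of_lt (by omega)]; omega)]
              exact hCnext ⟨j.val - 1, by omega⟩ ⟨j.val, by omega⟩
                (by simp only; rw [Nat.mod_eq_of_lt (by omega)]; omega)
            · have hjeq : j.val = ℓ := by omega
              rw [hV1 _ ⟨0, by omega⟩
                (by simp only; rw [show j.val + 1 = ℓ + 1 by omega, Nat.mod_self]; omega)
                (by simp only; rw [show j.val + 1 = ℓ + 1 by omega, Nat.mod_self])]
              exact hCnext ⟨j.val - 1, by omega⟩ ⟨0, by omega⟩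
                (by simp only; rw [show j.val - 1 + 1 = ℓ by omega, Nat.mod_self])
  refine ⟨key, ?_⟩
  set I : Finset (Fin ℓ) := Finset.univ.filter (fun i => v i ∈ Sset H v h u) with hI
  have hS : Sset H v h u = ↑(I.image v) := by
    ext w
    simp only [Finset.coe_image, Set.mem_image, Finset.mem_coe, hI, Finset.mem_filter,
      Finset.mem_univ, true_and]
    constructor
    · rintro hw
      obtain ⟨⟨i, rfl⟩, he⟩ := id hw
      exact ⟨i, hw, rfl⟩
    · rintro ⟨i, hi, rfl⟩
      exact hi
  have hcard : (Sset H v h u).ncard = I.card := by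
    rw [hS, Set.ncard_coe_finset, Finset.card_image_of_injective _ hv]
  have hcinj : Function.Injective (cnext hℓ) := by
    intro a b hab
    have hv' : (a.val + 1) % ℓ = (b.val + 1) % ℓ := congrArg Fin.val hab
    have ha := a.isLt; have hb := b.isLt
    apply Fin.ext
    rcases Nat.lt_or_ge (a.val + 1) ℓ with h1 | h1 <;>
      rcases Nat.lt_or_ge (b.val + 1) ℓ with h2 | h2
    · rw [Nat.mod_eq_of_lt h1, Nat.mod_eq_of_lt h2] at hv'; omega
    · rw [Nat.mod_eq_of_lt h1, show b.val + 1 = ℓ by omega, Nat.mod_self] at hv'; omega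
    · rw [Nat.mod_eq_of_lt h2, show a.val + 1 = ℓ by omega, Nat.mod_self] at hv'; omega
    · omega
  have hdisj : Disjoint I (I.image (cnext hℓ)) := by
    rw [Finset.disjoint_right]
    intro a ha hai
    obtain ⟨j, hj, rfl⟩ := Finset.mem_image.mp ha
    exact key j ⟨(Finset.mem_filter.mp hj).2, (Finset.mem_filter.mp hai).2⟩
  have hunion := Finset.card_le_univ (I ∪ I.image (cnext hℓ))
  rw [Finset.card_union_of_disjoint hdisj, Finset.card_image_of_injective _ hcinj,
    Fintype.card_fin] at hunion
  omega
end
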